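/- arXiv:math/9811095 — 9 statements merged into one kernel-verified Lean document; each statement's English description precedes it below -/
import Mathlib

section
/- The map sending the monomial x_1^{α_1}⋯x_n^{α_n} to the integer partition having α_n parts equal to n, α_{n-1} parts equal to n−1, …, and α_1 parts equal to 1 is an order isomorphism from the poset (M, C_{·,·}) onto the Young lattice of weakly decreasing, eventually zero sequences of nonnegative integers ordered by pointwise comparison. In particular (M, C_{·,·}) is a distributive lattice. -/
/-!
Encode a monomial `m` by its tail sums `tail m r = ∑_{p ≥ r} m p`. This is the transpose of the
partition attached to `m`, and `m ↦ tail m` is a bijection onto the Young lattice. Dividing and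
moving an exponent to a smaller variable can only lower tails. Conversely, if `tail b ≤ tail a`
and `a ≠ b`, then at the largest `r` where they differ `a` has a variable `x_{r+1}` that can be
moved down to `x_r` (or divided out when `r = 0`), which lowers `tail a` at `r` alone; induction on
the weighted degree gives a `C`-chain from `a` to `b`. Hence `C_{·,·}` is the pointwise order on
tails, and transposition, an involutive order automorphism of the Young lattice, finishes.
-/

/-- The free abelian monoid `M` on variables `x₁, x₂, …`, identified with
finitely supported exponent vectors; index `i : ℕ` represents the variable `x_{i+1}`. -/
abbrev Mon : Type := ℕ →₀ ℕ

/-- Total degree of a monomial. -/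
def deg (m : Mon) : ℕ := m.sum fun _ v => v

/-- `m` is a monomial in the first `n` variables, i.e. `m ∈ Mⁿ`. -/
def InVars (n : ℕ) (m : Mon) : Prop := ∀ i ∈ m.support, i < n

/-- Elementary move: `m = (x_i / x_j) · m'` for some `i < j` with `x_j ∣ m'`. -/
def ElemMove (m m' : Mon) : Prop :=
  ∃ i j : ℕ, i < j ∧ m + Finsupp.single j 1 = m' + Finsupp.single i 1

/-- Stable move: `m = (x_i / x_s) · m'` where `s = maxsupp m'` and `i < s`. -/
def StableMove (m m' : Mon) : Prop :=
  ∃ s i : ℕ, i < s ∧ m' s ≠ 0 ∧ (∀ t, s < t → m' t = 0) ∧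
    m + Finsupp.single s 1 = m' + Finsupp.single i 1

/-- The divisibility relation `D`: `(m, m') ∈ D` iff `m'` divides `m`. -/
def Dvd' (m m' : Mon) : Prop := ∃ t : Mon, m = m' + t

/-- The strongly stable partial order `A_{n,d}` on monomials of degree `d`
in the first `n` variables: reflexive–transitive closure of elementary moves
within `M_d^n`. -/
def Asub (n d : ℕ) (m m' : Mon) : Prop :=
  Relation.ReflTransGen
    (fun a b => InVars n a ∧ InVars n b ∧ deg a = d ∧ deg b = d ∧ ElemMove a b) m m'

/-- `A_{·,·} = rtr(D ∪ ⋃_{n,d} A_{n,d})`. -/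
def Aall : Mon → Mon → Prop :=
  Relation.ReflTransGen (fun a b => Dvd' a b ∨ ∃ n d, Asub n d a b)

/-- `C_{n,d}` is the dual of `A_{n,d}`, and `C_{·,·} = rtr(D ∪ ⋃_{n,d} C_{n,d})`. -/
def Call : Mon → Mon → Prop :=
  Relation.ReflTransGen (fun a b => Dvd' a b ∨ ∃ n d, Asub n d b a)

/-- The Young lattice: weakly decreasing, eventually zero sequences of
nonnegative integers (`l k` is the `(k+1)`-st part). -/
def Young : Type := {l : ℕ → ℕ // (∀ i, l (i + 1) ≤ l i) ∧ ∃ N, ∀ i, N ≤ i → l i = 0}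

namespace Young

instance : DistribLattice Young :=
  Subtype.distribLattice
    (fun _ _ ⟨hs, N, hN⟩ ⟨ht, M, hM⟩ =>
      ⟨fun i => max_le_max (hs i) (ht i),
        N + M, fun i hi => by simp [hN i (by omega), hM i (by omega)]⟩)
    (fun _ _ ⟨hs, N, _⟩ ⟨ht, _, _⟩ =>
      ⟨fun i => min_le_min (hs i) (ht i), N, fun i hi => by simp_all⟩)

lemma ext {l l' : Young} (h : ∀ k, l.1 k = l'.1 k) : l = l' := Subtype.ext (funext h)

lemma antitone (l : Young) : Antitone l.1 := antitone_nat_of_succ_le l.2.1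

lemma sInf_le_iff (l : Young) (r k : ℕ) : sInf {i | l.1 i ≤ r} ≤ k ↔ l.1 k ≤ r := by
  obtain ⟨N, hN⟩ := l.2.2
  refine ⟨fun h => (l.antitone h).trans (Nat.sInf_mem (s := {i | l.1 i ≤ r}) ⟨N, ?_⟩),
    fun h => Nat.sInf_le h⟩
  simp [hN N le_rfl]

/-- The conjugate partition: `transpose l r` is the number of parts of `l` exceeding `r`. -/
noncomputable def transpose (l : Young) : Young :=
  ⟨fun r => sInf {i | l.1 i ≤ r},
    fun r => (l.sInf_le_iff _ _).2 (((l.sInf_le_iff r _).1 le_rfl).trans r.le_succ),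
    l.1 0, fun r hr => Nat.le_zero.1 ((l.sInf_le_iff r 0).2 hr)⟩

lemma transpose_le_iff (l : Young) {r k : ℕ} : l.transpose.1 r ≤ k ↔ l.1 k ≤ r :=
  l.sInf_le_iff r k

lemma transpose_transpose (l : Young) : l.transpose.transpose = l :=
  ext fun k => eq_of_forall_ge_iff fun j => by rw [transpose_le_iff, transpose_le_iff]

lemma transpose_bijective : Function.Bijective transpose :=
  Function.Involutive.bijective transpose_transpose

lemma transpose_le_transpose_iff {l l' : Young} : l.transpose ≤ l'.transpose ↔ l ≤ l' := by
  refine ⟨fun h k => ?_, fun h r => ?_⟩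
  · rw [← transpose_le_iff]
    exact (h _).trans (l'.transpose_le_iff.2 le_rfl)
  · rw [transpose_le_iff]
    exact (h _).trans (l'.transpose_le_iff.1 le_rfl)

lemma card_transpose_eq_succ (l : Young) (p : ℕ) :
    Nat.card {k // l.transpose.1 k = p + 1} = l.1 p - l.1 (p + 1) := by
  have hset : {k | l.transpose.1 k = p + 1} = Set.Ico (l.1 (p + 1)) (l.1 p) := by
    ext k
    have h₁ := l.transpose_le_iff (r := k) (k := p + 1)
    have h₂ := l.transpose_le_iff (r := k) (k := p)
    simp only [Set.mem_ofPred_eq, Set.mem_Ico]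
    omega
  change Nat.card ({k | l.transpose.1 k = p + 1} : Set ℕ) = _
  rw [hset, Nat.card_coe_set_eq, Set.ncard_Ico_nat]

end Young

/-- `tail m r = ∑_{p ≥ r} m p` counts the parts `≥ r + 1` of the partition of `m`, so `tail m` is
the transpose of that partition. -/
noncomputable def tail (m : Mon) (r : ℕ) : ℕ :=
  Finsupp.weight (fun p => if r ≤ p then 1 else 0) m

lemma tail_add (a b : Mon) (r : ℕ) : tail (a + b) r = tail a r + tail b r := map_add _ a b

lemma tail_single (j c r : ℕ) : tail (Finsupp.single j c) r = if r ≤ j then c else 0 := by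
  simp [tail, Finsupp.weight_single]

lemma tail_eq_add_tail_succ (m : Mon) (r : ℕ) : tail m r = m r + tail m (r + 1) := by
  induction m using Finsupp.induction_linear with
  | zero => simp [tail]
  | add a b ha hb => simp only [tail_add, Finsupp.add_apply, ha, hb]; ring
  | single j c =>
    simp only [tail_single, Finsupp.single_apply]
    split_ifs <;> omega

lemma tail_sub_tail_succ (m : Mon) (p : ℕ) : tail m p - tail m (p + 1) = m p := by
  rw [tail_eq_add_tail_succ m p]; omega

lemma tail_injective : Function.Injective tail :=
  fun a b h => Finsupp.ext fun p => by rw [← tail_sub_tail_succ a, ← tail_sub_tail_succ b, h]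

lemma exists_inVars (m : Mon) : ∃ n, InVars n m := by
  obtain ⟨n, hn⟩ := m.support.exists_nat_subset_range
  exact ⟨n, fun i hi => Finset.mem_range.1 (hn hi)⟩

lemma InVars.mono {n n' : ℕ} {m : Mon} (h : InVars n m) (hn : n ≤ n') : InVars n' m :=
  fun i hi => (h i hi).trans_le hn

lemma exists_forall_le_apply_eq_zero (m : Mon) : ∃ N, ∀ p, N ≤ p → m p = 0 := by
  obtain ⟨N, hN⟩ := exists_inVars m
  exact ⟨N, fun p hp => Finsupp.notMem_support_iff.1 fun h => absurd (hN p h) (not_lt.2 hp)⟩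

lemma tail_eq_zero {m : Mon} {r : ℕ} (h : ∀ p, r ≤ p → m p = 0) : tail m r = 0 := by
  rw [tail, Finsupp.weight_apply, Finsupp.sum]
  refine Finset.sum_eq_zero fun p hp => ?_
  by_cases hrp : r ≤ p
  · exact absurd (h p hrp) (Finsupp.mem_support_iff.1 hp)
  · simp [hrp]

noncomputable def ofTail (l : Young) : Mon :=
  Finsupp.ofSupportFinite (fun p => l.1 p - l.1 (p + 1)) <| by
    obtain ⟨N, hN⟩ := l.2.2
    refine (Set.finite_Iio N).subset fun p hp => ?_
    by_contra hpN
    exact hp (by simp [hN p (not_lt.1 hpN), hN (p + 1) (by simp at hpN; omega)])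

lemma ofTail_apply (l : Young) (p : ℕ) : ofTail l p = l.1 p - l.1 (p + 1) := rfl

lemma tail_ofTail (l : Young) (r : ℕ) : tail (ofTail l) r = l.1 r := by
  obtain ⟨N, hN⟩ := l.2.2
  have hzero : ∀ r, N ≤ r → tail (ofTail l) r = l.1 r := fun r hr => by
    rw [hN r hr, tail_eq_zero fun p hp => by rw [ofTail_apply, hN p (hr.trans hp), Nat.zero_sub]]
  rcases le_total N r with hr | hr
  · exact hzero r hr
  · induction hr using Nat.decreasingInduction with
    | self => exact hzero N le_rfl
    | of_succ k _ ih =>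
      rw [tail_eq_add_tail_succ, ih, ofTail_apply]
      exact Nat.sub_add_cancel (l.2.1 k)

noncomputable def tailEquiv : Mon ≃ Young where
  toFun m := ⟨tail m, fun r => (tail_eq_add_tail_succ m r).symm ▸ Nat.le_add_left _ _,
    (exists_forall_le_apply_eq_zero m).imp fun _ hN _ hr =>
      tail_eq_zero fun p hp => hN p (hr.trans hp)⟩
  invFun := ofTail
  left_inv m := Finsupp.ext fun p => tail_sub_tail_succ m p
  right_inv l := Young.ext (tail_ofTail l)

lemma tail_le_tail_of_elemMove {u v : Mon} (h : ElemMove u v) (r : ℕ) : tail u r ≤ tail v r := by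
  obtain ⟨i, j, hij, heq⟩ := h
  have := congrArg (tail · r) heq
  simp only [tail_add, tail_single] at this
  split_ifs at this <;> omega

lemma tail_le_tail_of_asub {n d : ℕ} {u v : Mon} (h : Asub n d u v) (r : ℕ) :
    tail u r ≤ tail v r := by
  induction h with
  | refl => exact le_rfl
  | tail _ hstep ih => exact ih.trans (tail_le_tail_of_elemMove hstep.2.2.2.2 r)

lemma tail_le_tail_of_call {a b : Mon} (h : Call a b) (r : ℕ) : tail b r ≤ tail a r := by
  induction h with
  | refl => exact le_rfl
  | tail _ hstep ih =>
    refine le_trans ?_ ih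
    rcases hstep with ⟨t, rfl⟩ | ⟨n, d, hA⟩
    · rw [tail_add]; exact Nat.le_add_right _ _
    · exact tail_le_tail_of_asub hA r

lemma deg_add (a b : Mon) : deg (a + b) = deg a + deg b := map_add Finsupp.degree a b

lemma call_of_elemMove {a b : Mon} (h : ElemMove b a) : Call a b := by
  obtain ⟨n, hn⟩ := exists_inVars a
  obtain ⟨n', hn'⟩ := exists_inVars b
  have hdeg : deg b = deg a := by
    obtain ⟨i, j, -, heq⟩ := h
    have := congrArg deg heq
    simp only [deg_add] at this
    simpa [deg] using this
  exact .single (.inr ⟨n + n', deg a, .single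
    ⟨hn'.mono (Nat.le_add_left _ _), hn.mono (Nat.le_add_right _ _), hdeg, rfl, h⟩⟩)

lemma exists_eq_add_single {a : Mon} {r : ℕ} (ha : a r ≠ 0) : ∃ c, a = c + Finsupp.single r 1 := by
  refine ⟨a - Finsupp.single r 1, (tsub_add_cancel_of_le ?_).symm⟩
  intro p
  rw [Finsupp.single_apply]
  split_ifs with hp
  · subst hp; omega
  · exact Nat.zero_le _

/-- The witness moves one unit of exponent from index `r` to `r - 1`, or drops it when `r = 0`. -/
lemma exists_call_tail_eq {a : Mon} {r : ℕ} (ha : a r ≠ 0) :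
    ∃ a', Call a a' ∧ Finsupp.weight (· + 1) a' < Finsupp.weight (· + 1) a ∧
      ∀ s, tail a' s + (if s = r then 1 else 0) = tail a s := by
  obtain ⟨c, rfl⟩ := exists_eq_add_single ha
  cases r with
  | zero =>
    refine ⟨c, .single (.inl ⟨_, rfl⟩), ?_, fun s => ?_⟩
    · simp [Finsupp.weight_single]
    · simp only [tail_add, tail_single]
      split_ifs <;> omega
  | succ j =>
    refine ⟨c + Finsupp.single j 1,
      call_of_elemMove ⟨j, j + 1, j.lt_succ_self, add_right_comm _ _ _⟩, ?_, fun s => ?_⟩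
    · simp [Finsupp.weight_single]
    · simp only [tail_add, tail_single]
      split_ifs <;> omega

lemma exists_max_tail_lt {a b : Mon} (hab : a ≠ b) (hle : ∀ r, tail b r ≤ tail a r) :
    ∃ r, tail b r < tail a r ∧ ∀ s, r < s → tail b s = tail a s := by
  set S := {r | tail b r < tail a r}
  have hne : S.Nonempty := by
    by_contra hS
    exact hab (tail_injective (funext fun r =>
      (le_antisymm (hle r) (not_lt.1 fun h => hS ⟨r, h⟩)).symm))
  have hbdd : BddAbove S := by
    obtain ⟨N, hN⟩ := (tailEquiv a).2.2
    refine ⟨N, fun r (hr : tail b r < tail a r) => not_lt.1 fun h => ?_⟩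
    have : tail a r = 0 := hN r h.le
    omega
  exact ⟨sSup S, Nat.sSup_mem hne hbdd, fun s hs =>
    le_antisymm (hle s) (not_lt.1 fun h => (le_csSup hbdd h).not_gt hs)⟩

lemma call_of_tail_le {a b : Mon} (hle : ∀ r, tail b r ≤ tail a r) : Call a b := by
  induction hw : Finsupp.weight (· + 1) a using Nat.strong_induction_on generalizing a with
  | _ w ih =>
    by_cases hab : a = b
    · exact hab ▸ .refl
    obtain ⟨r, hlt, heq⟩ := exists_max_tail_lt hab hle
    have har : a r ≠ 0 := by
      have := heq (r + 1) r.lt_succ_self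
      rw [tail_eq_add_tail_succ a, tail_eq_add_tail_succ b] at hlt
      omega
    obtain ⟨a', hcall, hw', htail⟩ := exists_call_tail_eq har
    refine hcall.trans (ih _ (hw ▸ hw') (fun s => ?_) rfl)
    have := htail s
    split_ifs at this with hs
    · subst hs; omega
    · have := hle s; omega

lemma call_iff_tailEquiv_le {a b : Mon} : Call a b ↔ tailEquiv b ≤ tailEquiv a :=
  ⟨tail_le_tail_of_call, call_of_tail_le⟩

/-- The map sending `x₁^{α₁} ⋯ x_n^{α_n}` to the partition with
`α_n` parts equal to `n`, …, `α₁` parts equal to `1` (i.e. the partition whose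
multiplicity of the part `p+1` is the exponent `m p` of `x_{p+1}`) is an order
isomorphism from `(M, C_{·,·})` onto the Young lattice ordered by pointwise
comparison.  In particular `(M, C_{·,·})` is a distributive lattice. -/
theorem stmt4 :
    (∃ f : Mon → Young,
      Function.Bijective f ∧
      (∀ m : Mon, ∀ p : ℕ, Nat.card {k : ℕ // (f m).1 k = p + 1} = m p) ∧
      (∀ a b : Mon, Call a b ↔ ∀ k, (f b).1 k ≤ (f a).1 k)) ∧
    (∃ inst : DistribLattice Mon, ∀ a b : Mon, inst.le a b ↔ Call b a) := by
  refine ⟨⟨fun m => (tailEquiv m).transpose, Young.transpose_bijective.comp tailEquiv.bijective,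
    fun m p => ?_, fun a b => ?_⟩, tailEquiv.distribLattice, fun a b => call_iff_tailEquiv_le.symm⟩
  · rw [Young.card_transpose_eq_succ]
    exact tail_sub_tail_succ m p
  · rw [call_iff_tailEquiv_le, ← Young.transpose_le_transpose_iff]
    rfl
end

section
/- For positive integers n and d, the poset (M_d^n, A_{n,d}) is order-isomorphic to the poset of Ferrers diagrams (partitions) fitting inside a d × (n−1) box, i.e. weakly decreasing sequences λ_1 ≥ ⋯ ≥ λ_d of nonnegative integers with λ_1 ≤ n−1, ordered by pointwise comparison. In particular (M_d^n, A_{n,d}) is a distributive lattice. -/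
open Relation Multiset

section CountLE

variable {α : Type*} [LinearOrder α]

def countLE (t : α) (M : Multiset α) : ℕ := M.countP (· ≤ t)

lemma countLE_mono (M : Multiset α) {t t' : α} (h : t ≤ t') : countLE t M ≤ countLE t' M :=
  Quotient.inductionOn M fun _ => List.countP_mono_left fun _ _ hx => by
    simp only [decide_eq_true_eq] at hx ⊢
    exact hx.trans h

lemma countLE_add_singleton (t a : α) (M : Multiset α) :
    countLE t (M + {a}) = countLE t M + if a ≤ t then 1 else 0 := by
  rw [countLE, countLE, countP_add, ← cons_zero, countP_cons, countP_zero, zero_add]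

lemma List.Pairwise.getElem_le_iff_lt_countP {L : List α} (hL : L.Pairwise (· ≤ ·)) (t : α)
    {k : ℕ} (hk : k < L.length) : L[k] ≤ t ↔ k < L.countP (· ≤ t) := by
  induction L generalizing k with
  | nil => simp at hk
  | cons a L ih =>
    obtain ⟨ha, hL⟩ := List.pairwise_cons.mp hL
    by_cases hat : a ≤ t
    · cases k with
      | zero => simp [hat]
      | succ k => simp [hat, ih hL (Nat.lt_of_succ_lt_succ hk)]
    · have hzero : L.countP (· ≤ t) = 0 :=
        List.countP_eq_zero.mpr fun x hx hxt => hat ((ha x hx).trans (by simpa using hxt))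
      cases k with
      | zero => simp [hat, hzero]
      | succ k =>
        simpa [hzero, hat] using fun h => hat ((ha _ (L.getElem_mem _)).trans h)

lemma getElem_sort_le_iff (M : Multiset α) (t : α) {k : ℕ} (hk : k < (M.sort).length) :
    (M.sort)[k] ≤ t ↔ k < countLE t M := by
  rw [(pairwise_sort M _).getElem_le_iff_lt_countP t hk, countLE, ← coe_countP, sort_eq]

theorem sort_le_sort_iff {M M' : Multiset α} (h : card M = card M') :
    (∀ k (hk : k < card M), (M.sort)[k]'(by simpa) ≤ (M'.sort)[k]'(by simpa [← h])) ↔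
      ∀ t, countLE t M' ≤ countLE t M := by
  constructor
  · intro hle t
    by_contra! hlt
    have hk : countLE t M < card M := hlt.trans_le (h ▸ countP_le_card _ _)
    have h' := (getElem_sort_le_iff M' t (k := countLE t M) (by simpa [← h])).mpr hlt
    exact (getElem_sort_le_iff M t _).mp ((hle _ hk).trans h') |>.false
  · intro hcount k hk
    rw [getElem_sort_le_iff]
    exact ((getElem_sort_le_iff M' _ _).mp le_rfl).trans_le (hcount _)

theorem eq_of_countLE_eq {M M' : Multiset α} (h : card M = card M')
    (hcount : ∀ t, countLE t M = countLE t M') : M = M' := by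
  have hle := (sort_le_sort_iff h).mpr fun t => (hcount t).ge
  have hge := (sort_le_sort_iff h.symm).mpr fun t => (hcount t).le
  rw [← sort_eq M (· ≤ ·), ← sort_eq M' (· ≤ ·)]
  congr 1
  exact List.ext_getElem (by simpa using h) fun k hk _ =>
    (hle k (by simpa using hk)).antisymm (hge k (by simpa [← h] using hk))

end CountLE

section LowerMove

def LowerMove (M M' : Multiset ℕ) : Prop := ∃ i j : ℕ, i < j ∧ M + {j} = M' + {i}

variable {M M' : Multiset ℕ}

lemma LowerMove.card_eq (h : LowerMove M M') : card M = card M' := by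
  obtain ⟨i, j, -, heq⟩ := h
  simpa using congrArg card heq

lemma LowerMove.countLE_le (h : LowerMove M M') (t : ℕ) : countLE t M' ≤ countLE t M := by
  obtain ⟨i, j, hij, heq⟩ := h
  have := congrArg (countLE t) heq
  rw [countLE_add_singleton, countLE_add_singleton] at this
  split_ifs at this <;> omega

lemma LowerMove.sum_lt (h : LowerMove M M') : M.sum < M'.sum := by
  obtain ⟨i, j, hij, heq⟩ := h
  have := congrArg sum heq
  simp only [sum_add, sum_singleton] at this
  omega

/-- Lower the smallest element `v > t₀` of `M'` to `t₀`: the counts of `M'` only grow on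
`[t₀, v)`, where they equal the count at `t₀`, which was strictly below that of `M`. -/
lemma exists_lowerMove_of_countLE_lt (hle : ∀ t, countLE t M' ≤ countLE t M) {t₀ : ℕ}
    (hlt : countLE t₀ M' < countLE t₀ M) (hcard : card M = card M') :
    ∃ M'', LowerMove M'' M' ∧ ∀ t, countLE t M'' ≤ countLE t M := by
  have hex : ∃ v, t₀ < v ∧ v ∈ M' := by
    by_contra! h
    have hall : countLE t₀ M' = card M' :=
      countP_eq_card.mpr fun v hv => not_lt.mp fun hv' => h v hv' hv
    exact hlt.not_ge (hall ▸ hcard ▸ countP_le_card _ M)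
  classical
  let v := Nat.find hex
  obtain ⟨htv, hv⟩ : t₀ < v ∧ v ∈ M' := Nat.find_spec hex
  have hgap (t : ℕ) (h₀ : t₀ ≤ t) (h₁ : t < v) : countLE t M' = countLE t₀ M' :=
    countP_congr rfl fun x hx => propext ⟨fun hxt => not_lt.mp fun hx₀ =>
      (Nat.find_min' hex ⟨hx₀, hx⟩).not_gt (hxt.trans_lt h₁), fun hx₀ => hx₀.trans h₀⟩
  have hM' : M'.erase v + {v} = M' := by rw [add_comm, singleton_add, cons_erase hv]
  refine ⟨M'.erase v + {t₀}, ⟨t₀, v, htv, by rw [add_right_comm, hM']⟩, fun t => ?_⟩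
  have hcount := countLE_add_singleton t v (M'.erase v)
  rw [hM'] at hcount
  rw [countLE_add_singleton]
  by_cases h₀ : t₀ ≤ t
  · by_cases h₁ : v ≤ t
    · simp only [h₀, h₁, if_true] at hcount ⊢
      exact hcount ▸ hle t
    · simp only [h₀, h₁, if_true, if_false] at hcount ⊢
      have := countLE_mono M h₀
      have := hgap t h₀ (not_le.mp h₁)
      omega
  · have h₁ : ¬ v ≤ t := fun h => h₀ (htv.le.trans h)
    simp only [h₀, h₁, if_false] at hcount ⊢
    exact hcount ▸ hle t

lemma exists_countLE_lt_of_ne (hcard : card M = card M') (hle : ∀ t, countLE t M' ≤ countLE t M)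
    (hne : M ≠ M') : ∃ t, countLE t M' < countLE t M := by
  by_contra! hge
  exact hne (eq_of_countLE_eq hcard fun t => (hle t).antisymm' (hge t))

lemma countLE_le_of_reflTransGen (h : ReflTransGen LowerMove M M') (t : ℕ) :
    countLE t M' ≤ countLE t M := by
  induction h with
  | refl => exact le_rfl
  | tail _ hmove ih => exact (hmove.countLE_le t).trans ih

theorem reflTransGen_lowerMove_iff (hcard : card M = card M') :
    ReflTransGen LowerMove M M' ↔ ∀ t, countLE t M' ≤ countLE t M := by
  refine ⟨countLE_le_of_reflTransGen, ?_⟩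
  induction hs : M'.sum using Nat.strong_induction_on generalizing M' with
  | _ s ih =>
    intro hle
    by_cases hne : M = M'
    · exact hne ▸ ReflTransGen.refl
    obtain ⟨t₀, hlt⟩ := exists_countLE_lt_of_ne hcard hle hne
    obtain ⟨M'', hmove, hle''⟩ := exists_lowerMove_of_countLE_lt hle hlt hcard
    exact (ih _ (hs ▸ hmove.sum_lt) (hcard.trans hmove.card_eq.symm) rfl hle'').tail hmove

end LowerMove

section Monomials

lemma elemMove_iff_lowerMove (m m' : Mon) :
    ElemMove m m' ↔ LowerMove (Finsupp.toMultiset m) (Finsupp.toMultiset m') := by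
  have hinj : Function.Injective (Finsupp.toMultiset : Mon → Multiset ℕ) :=
    Function.LeftInverse.injective Finsupp.toMultiset_toFinsupp
  refine exists₂_congr fun i j => and_congr_right fun _ => ?_
  rw [← hinj.eq_iff, _root_.map_add, _root_.map_add, Finsupp.toMultiset_single,
    Finsupp.toMultiset_single, one_nsmul, one_nsmul]

lemma reflTransGen_elemMove_iff (m m' : Mon) :
    ReflTransGen ElemMove m m' ↔
      ReflTransGen LowerMove (Finsupp.toMultiset m) (Finsupp.toMultiset m') := by
  refine ⟨ReflTransGen.lift _ (fun a b => (elemMove_iff_lowerMove a b).mp) _ _, fun h => ?_⟩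
  have hlift := ReflTransGen.lift Multiset.toFinsupp (p := ElemMove) (fun a b hab => by
    rwa [Function.onFun, elemMove_iff_lowerMove, Multiset.toFinsupp_toMultiset,
      Multiset.toFinsupp_toMultiset]) _ _ h
  simpa [Function.onFun] using hlift

lemma card_toMultiset_eq_deg (m : Mon) : card (Finsupp.toMultiset m) = deg m :=
  Finsupp.card_toMultiset m

abbrev MonomialsOfDeg (n d : ℕ) : Type := {m : Mon // InVars n m ∧ deg m = d}

abbrev BoxPartition (n d : ℕ) : Type :=
  {l : Fin d → ℕ // (∀ i j : Fin d, i ≤ j → l j ≤ l i) ∧ ∀ i, l i ≤ n - 1}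

instance (n d : ℕ) : DistribLattice (BoxPartition n d) :=
  Subtype.distribLattice
    (fun _ _ hs ht => ⟨Antitone.sup hs.1 ht.1, fun i => sup_le (hs.2 i) (ht.2 i)⟩)
    (fun _ _ hs ht => ⟨Antitone.inf hs.1 ht.1, fun i => inf_le_of_left_le (hs.2 i)⟩)

namespace MonomialsOfDeg

variable {n d : ℕ}

lemma card_toMultiset (a : MonomialsOfDeg n d) : card (Finsupp.toMultiset a.1) = d := by
  rw [card_toMultiset_eq_deg, a.2.2]

lemma length_sort (a : MonomialsOfDeg n d) : ((Finsupp.toMultiset a.1).sort).length = d := by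
  rw [Multiset.length_sort, card_toMultiset]

noncomputable def var (a : MonomialsOfDeg n d) (k : Fin d) : ℕ :=
  ((Finsupp.toMultiset a.1).sort)[k.1]'(k.2.trans_eq a.length_sort.symm)

lemma var_lt (a : MonomialsOfDeg n d) (k : Fin d) : a.var k < n :=
  a.2.1 _ <| (Finsupp.mem_toMultiset _ _).mp <| (mem_sort _).mp <| List.getElem_mem _

lemma monotone_var (a : MonomialsOfDeg n d) : Monotone a.var := fun i j hij =>
  (pairwise_sort (Finsupp.toMultiset a.1) _).rel_get_of_le
    (a := ⟨i, i.2.trans_eq a.length_sort.symm⟩) (b := ⟨j, j.2.trans_eq a.length_sort.symm⟩) hij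

lemma reflTransGen_elemMove_iff_var_le (a b : MonomialsOfDeg n d) :
    ReflTransGen ElemMove a.1 b.1 ↔ ∀ k, a.var k ≤ b.var k := by
  have hcard := (card_toMultiset a).trans (card_toMultiset b).symm
  rw [reflTransGen_elemMove_iff, reflTransGen_lowerMove_iff hcard, ← sort_le_sort_iff hcard]
  exact ⟨fun h k => h k (k.2.trans_eq (card_toMultiset a).symm),
    fun h k hk => h ⟨k, hk.trans_eq (card_toMultiset a)⟩⟩

lemma var_injective : Function.Injective (var (n := n) (d := d)) := by
  intro a b h
  have hsort : (Finsupp.toMultiset a.1).sort = (Finsupp.toMultiset b.1).sort :=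
    List.ext_getElem (a.length_sort.trans b.length_sort.symm) fun k hk _ =>
      congrFun h ⟨k, hk.trans_eq a.length_sort⟩
  have := congrArg (fun L : List ℕ => Multiset.toFinsupp (L : Multiset ℕ)) hsort
  simp only [sort_eq, Finsupp.toMultiset_toFinsupp] at this
  exact Subtype.ext this

noncomputable def toBoxPartition (a : MonomialsOfDeg n d) : BoxPartition n d :=
  ⟨fun k => n - 1 - a.var k, fun _ _ hij => Nat.sub_le_sub_left (a.monotone_var hij) _,
    fun _ => Nat.sub_le _ _⟩

lemma toBoxPartition_injective : Function.Injective (toBoxPartition (n := n) (d := d)) := by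
  intro a b h
  refine var_injective (funext fun k => ?_)
  have := congrFun (congrArg Subtype.val h) k
  have := a.var_lt k
  have := b.var_lt k
  simp only [toBoxPartition] at *
  omega

lemma toBoxPartition_surjective (hn : 0 < n) :
    Function.Surjective (toBoxPartition (n := n) (d := d)) := by
  rintro ⟨l, hanti, hbound⟩
  let L := List.ofFn fun k => n - 1 - l k
  have hm : Finsupp.toMultiset (Multiset.toFinsupp (L : Multiset ℕ)) = L :=
    Multiset.toFinsupp_toMultiset _
  have hsort : (Finsupp.toMultiset (Multiset.toFinsupp (L : Multiset ℕ))).sort = L := by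
    rw [hm, coe_sort]
    exact List.mergeSort_eq_self _ <| List.pairwise_ofFn.mpr fun i j hij =>
      Nat.sub_le_sub_left (hanti i j hij.le) _
  refine ⟨⟨Multiset.toFinsupp L, fun i hi => ?_, ?_⟩, ?_⟩
  · rw [← Finsupp.mem_toMultiset, hm, mem_coe, List.mem_ofFn] at hi
    obtain ⟨k, rfl⟩ := hi
    omega
  · rw [← card_toMultiset_eq_deg, hm, coe_card, List.length_ofFn]
  · refine Subtype.ext (funext fun k => ?_)
    simp only [toBoxPartition, var]
    rw [List.getElem_of_eq hsort]
    simp only [L, List.getElem_ofFn, Fin.eta]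
    have := hbound k
    omega

lemma reflTransGen_elemMove_iff_toBoxPartition_le (a b : MonomialsOfDeg n d) :
    ReflTransGen ElemMove a.1 b.1 ↔ b.toBoxPartition ≤ a.toBoxPartition := by
  rw [reflTransGen_elemMove_iff_var_le]
  refine forall_congr' fun k => ?_
  have := a.var_lt k
  have := b.var_lt k
  show _ ↔ n - 1 - b.var k ≤ n - 1 - a.var k
  omega

end MonomialsOfDeg

end Monomials

theorem stmt5_general (n d : ℕ) (hn : 0 < n) :
    (∃ f : {m : Mon // InVars n m ∧ deg m = d} →
        {l : Fin d → ℕ // (∀ i j : Fin d, i ≤ j → l j ≤ l i) ∧ ∀ i, l i ≤ n - 1},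
      Function.Bijective f ∧
      (∀ a b : {m : Mon // InVars n m ∧ deg m = d},
        Relation.ReflTransGen ElemMove a.1 b.1 ↔ ∀ i, (f b).1 i ≤ (f a).1 i)) ∧
    (∃ inst : DistribLattice {m : Mon // InVars n m ∧ deg m = d},
      ∀ a b, inst.le a b ↔ Relation.ReflTransGen ElemMove b.1 a.1) := by
  have hbij : Function.Bijective (MonomialsOfDeg.toBoxPartition (n := n) (d := d)) :=
    ⟨MonomialsOfDeg.toBoxPartition_injective, MonomialsOfDeg.toBoxPartition_surjective hn⟩
  exact ⟨⟨_, hbij, MonomialsOfDeg.reflTransGen_elemMove_iff_toBoxPartition_le⟩,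
    (Equiv.ofBijective _ hbij).distribLattice,
    fun a b => (MonomialsOfDeg.reflTransGen_elemMove_iff_toBoxPartition_le b a).symm⟩

/-- For positive integers `n, d`, the poset `(M_d^n, A_{n,d})`
(where `A_{n,d}` is the reflexive–transitive closure of elementary moves, which
preserve both degree and the variable range) is order-isomorphic to the poset of
partitions fitting inside a `d × (n-1)` box, i.e. weakly decreasing sequences
`λ₁ ≥ ⋯ ≥ λ_d` of nonnegative integers with `λ₁ ≤ n - 1`, ordered pointwise.
In particular `(M_d^n, A_{n,d})` is a distributive lattice. -/
theorem stmt5 (n d : ℕ) (hn : 0 < n) (hd : 0 < d) :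
    (∃ f : {m : Mon // InVars n m ∧ deg m = d} →
        {l : Fin d → ℕ // (∀ i j : Fin d, i ≤ j → l j ≤ l i) ∧ ∀ i, l i ≤ n - 1},
      Function.Bijective f ∧
      (∀ a b : {m : Mon // InVars n m ∧ deg m = d},
        Relation.ReflTransGen ElemMove a.1 b.1 ↔ ∀ i, (f b).1 i ≤ (f a).1 i)) ∧
    (∃ inst : DistribLattice {m : Mon // InVars n m ∧ deg m = d},
      ∀ a b, inst.le a b ↔ Relation.ReflTransGen ElemMove b.1 a.1) :=
  stmt5_general n d hn
end

section
/- The poset of filters of (M_d^3, A_{3,d}), ordered by inclusion, is order-isomorphic to the poset of partitions into distinct parts, each part at most d+1, ordered by containment of Young diagrams (pointwise comparison of the decreasing sequences of parts). -/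
noncomputable def mk3 (d b c : ℕ) : Mon :=
  Finsupp.single 0 (d - (b + c)) + Finsupp.single 1 b + Finsupp.single 2 c

lemma mk3_apply (d b c i : ℕ) :
    mk3 d b c i = if i = 0 then d - (b + c) else if i = 1 then b else if i = 2 then c else 0 := by
  rcases i with _|_|_|i <;> simp [mk3, Finsupp.single_apply]

lemma invars_mk3 (d b c : ℕ) : InVars 3 (mk3 d b c) := by
  intro i hi
  by_contra h
  push_neg at h
  rw [Finsupp.mem_support_iff] at hi
  apply hi
  rw [mk3_apply]
  split_ifs <;> omega

lemma deg_eq3 (m : Mon) (h : InVars 3 m) : deg m = m 0 + m 1 + m 2 := by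
  have hsub : m.support ⊆ Finset.range 3 := fun i hi => Finset.mem_range.mpr (h i hi)
  rw [deg, Finsupp.sum_of_support_subset m hsub _ (fun i _ => rfl)]
  rw [Finset.sum_range_succ, Finset.sum_range_succ, Finset.sum_range_one]

lemma deg_mk3 {d b c : ℕ} (h : b + c ≤ d) : deg (mk3 d b c) = d := by
  rw [deg_eq3 _ (invars_mk3 d b c), mk3_apply, mk3_apply, mk3_apply]
  simp
  omega

lemma ext3 (m m' : Mon) (h : InVars 3 m) (h' : InVars 3 m')
    (h0 : m 0 = m' 0) (h1 : m 1 = m' 1) (h2 : m 2 = m' 2) : m = m' := by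
  ext i
  rcases i with _|_|_|i
  · exact h0
  · exact h1
  · exact h2
  · have e1 : m (i+3) = 0 := by
      by_contra hne
      have := h (i+3) (Finsupp.mem_support_iff.mpr hne); omega
    have e2 : m' (i+3) = 0 := by
      by_contra hne
      have := h' (i+3) (Finsupp.mem_support_iff.mpr hne); omega
    rw [e1, e2]

lemma elem01 {d b c : ℕ} (h : b + 1 + c ≤ d) : ElemMove (mk3 d b c) (mk3 d (b+1) c) := by
  refine ⟨0, 1, Nat.zero_lt_one, ?_⟩
  ext i
  simp only [Finsupp.add_apply, mk3_apply, Finsupp.single_apply]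
  split_ifs <;> omega

lemma elem02 {d b c : ℕ} (h : b + c + 1 ≤ d) : ElemMove (mk3 d b c) (mk3 d b (c+1)) := by
  refine ⟨0, 2, by omega, ?_⟩
  ext i
  simp only [Finsupp.add_apply, mk3_apply, Finsupp.single_apply]
  split_ifs <;> omega

lemma elem12 (d b c : ℕ) : ElemMove (mk3 d (b+1) c) (mk3 d b (c+1)) := by
  refine ⟨1, 2, by omega, ?_⟩
  ext i
  simp only [Finsupp.add_apply, mk3_apply, Finsupp.single_apply]
  split_ifs <;> omega

lemma reachA {d b' c : ℕ} : ∀ {b : ℕ}, b' ≤ b → b + c ≤ d →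
    Relation.ReflTransGen ElemMove (mk3 d b' c) (mk3 d b c) := by
  intro b hb
  induction b, hb using Nat.le_induction with
  | base => intro _; exact Relation.ReflTransGen.refl
  | succ b hb ih =>
    intro h
    exact (ih (by omega)).tail (elem01 h)

lemma reachC (d b : ℕ) : ∀ (k c : ℕ),
    Relation.ReflTransGen ElemMove (mk3 d (b + k) c) (mk3 d b (c + k)) := by
  intro k
  induction k with
  | zero => intro c; exact Relation.ReflTransGen.refl
  | succ k ih =>
    intro c
    have h1 : ElemMove (mk3 d (b + (k+1)) c) (mk3 d (b + k) (c + 1)) := elem12 d (b + k) c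
    have h2 := ih (c + 1)
    rw [show c + 1 + k = c + (k + 1) by omega] at h2
    exact Relation.ReflTransGen.head h1 h2

lemma reach {d b c b' c' : ℕ} (h1 : c' ≤ c) (h2 : b' + c' ≤ b + c) (h3 : b + c ≤ d) :
    Relation.ReflTransGen ElemMove (mk3 d b' c') (mk3 d b c) := by
  obtain ⟨k, rfl⟩ : ∃ k, c = c' + k := ⟨c - c', by omega⟩
  exact (reachA (show b' ≤ b + k by omega) (show b + k + c' ≤ d by omega)).trans (reachC d b k c')

lemma elem_prefix {x y : Mon} (h : ElemMove x y) (n : ℕ) :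
    (∑ k ∈ Finset.range n, y k) ≤ ∑ k ∈ Finset.range n, x k := by
  obtain ⟨i, j, hij, he⟩ := h
  have h2 := congrArg (fun f : Mon => ∑ k ∈ Finset.range n, f k) he
  simp only [Finsupp.add_apply, Finset.sum_add_distrib, Finsupp.single_apply,
    Finset.sum_ite_eq, Finset.mem_range] at h2
  split_ifs at h2 <;> omega

lemma prefix_mono {m m' : Mon} (h : Relation.ReflTransGen ElemMove m' m) (n : ℕ) :
    (∑ k ∈ Finset.range n, m k) ≤ ∑ k ∈ Finset.range n, m' k := by
  induction h with
  | refl => exact le_refl _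
  | tail _ hstep ih => exact le_trans (elem_prefix hstep n) ih

lemma dominance {d : ℕ} {m m' : Mon} (hm : InVars 3 m) (hm' : InVars 3 m')
    (hdm : deg m = d) (hdm' : deg m' = d)
    (h : Relation.ReflTransGen ElemMove m' m) :
    m' 2 ≤ m 2 ∧ m' 1 + m' 2 ≤ m 1 + m 2 := by
  have p1 := prefix_mono h 1
  have p2 := prefix_mono h 2
  simp only [Finset.sum_range_succ, Finset.sum_range_zero] at p1 p2
  have e := deg_eq3 m hm
  have e' := deg_eq3 m' hm'
  omega

/-- The poset of filters of `(M_d^3, A_{3,d})`, ordered by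
inclusion, is order-isomorphic to the poset of partitions into distinct parts,
each part at most `d+1` (encoded as weakly decreasing, eventually zero sequences
whose nonzero entries are strictly decreasing and at most `d+1`), ordered by
containment of Young diagrams, i.e. pointwise comparison. -/
theorem stmt6 (d : ℕ) (hd : 0 < d) :
    ∃ f : {U : Set {m : Mon // InVars 3 m ∧ deg m = d} //
            ∀ m ∈ U, ∀ m' : {m : Mon // InVars 3 m ∧ deg m = d},
              Relation.ReflTransGen ElemMove m'.1 m.1 → m' ∈ U} →
          {l : ℕ → ℕ // l 0 ≤ d + 1 ∧ (∀ i, l (i + 1) ≤ l i) ∧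
            (∀ i, l (i + 1) ≠ 0 → l (i + 1) < l i)},
      Function.Bijective f ∧
      ∀ U W, U.1 ⊆ W.1 ↔ ∀ i, (f U).1 i ≤ (f W).1 i := by
  classical
  set T := {m : Mon // InVars 3 m ∧ deg m = d} with hTdef
  set Filt : Set T → Prop := fun U => ∀ m ∈ U, ∀ m' : T,
      Relation.ReflTransGen ElemMove m'.1 m.1 → m' ∈ U with hFiltdef
  let Q : Set T → ℕ → ℕ → Prop := fun U b c => ∃ m : T, m ∈ U ∧ m.1 1 = b ∧ m.1 2 = c
  let L : Set T → ℕ → ℕ := fun U i => sInf {b | ¬ Q U b i}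
  have hQle : ∀ U b c, Q U b c → b + c ≤ d := by
    rintro U b c ⟨m, hm, rfl, rfl⟩
    have h1 := deg_eq3 m.1 m.2.1
    have h2 := m.2.2
    omega
  have hne : ∀ U i, (d + 1) ∈ {b | ¬ Q U b i} := by
    intro U i h
    have := hQle U _ _ h
    omega
  have heq12 : ∀ x y : T, x.1 1 = y.1 1 → x.1 2 = y.1 2 → x = y := by
    intro x y h1 h2
    have dx := deg_eq3 x.1 x.2.1
    have dy := deg_eq3 y.1 y.2.1
    have dx2 := x.2.2
    have dy2 := y.2.2
    exact Subtype.ext (ext3 x.1 y.1 x.2.1 y.2.1 (by omega) h1 h2)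
  have hQdown : ∀ U, Filt U → ∀ b c b' c', Q U b c → c' ≤ c → b' + c' ≤ b + c → Q U b' c' := by
    rintro U hU b c b' c' ⟨m, hm, h1, h2⟩ hc hbc
    have hle : b + c ≤ d := hQle U b c ⟨m, hm, h1, h2⟩
    have hmeq : m.1 = mk3 d b c := by
      have h0 := deg_eq3 m.1 m.2.1
      have hmd := m.2.2
      refine ext3 m.1 _ m.2.1 (invars_mk3 d b c) ?_ ?_ ?_ <;>
        rw [mk3_apply] <;> simp <;> omega
    refine ⟨⟨mk3 d b' c', invars_mk3 d b' c', deg_mk3 (by omega)⟩, ?_, ?_, ?_⟩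
    · exact hU m hm _ (by simp only [hmeq]; exact reach hc hbc hle)
    · simp [mk3_apply]
    · simp [mk3_apply]
  have hlt : ∀ U, Filt U → ∀ b i, (b < L U i ↔ Q U b i) := by
    intro U hU b i
    constructor
    · intro h
      by_contra hq
      have := Nat.sInf_le (s := {b | ¬ Q U b i}) hq
      change L U i ≤ b at this
      omega
    · intro hq
      by_contra h
      push_neg at h
      have hmem : L U i ∈ {b | ¬ Q U b i} := Nat.sInf_mem ⟨d + 1, hne U i⟩
      exact hmem (hQdown U hU b i (L U i) i hq le_rfl (by omega))
  have hL0 : ∀ U, L U 0 ≤ d + 1 := fun U => Nat.sInf_le (hne U 0)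
  have hmono : ∀ U, Filt U → ∀ i, L U (i+1) ≤ L U i := by
    intro U hU i
    rcases Nat.eq_zero_or_pos (L U (i+1)) with h | h
    · omega
    · have hq : Q U (L U (i+1) - 1) (i+1) := (hlt U hU _ _).1 (by omega)
      have := (hlt U hU (L U (i+1) - 1) i).2
        (hQdown U hU _ _ _ _ hq (by omega) (by omega))
      omega
  have hstrict : ∀ U, Filt U → ∀ i, L U (i+1) ≠ 0 → L U (i+1) < L U i := by
    intro U hU i h
    have hq : Q U (L U (i+1) - 1) (i+1) := (hlt U hU _ _).1 (by omega)
    have := (hlt U hU (L U (i+1)) i).2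
      (hQdown U hU _ _ _ _ hq (by omega) (by omega))
    omega
  have hmemchar : ∀ U, Filt U → ∀ m : T, m ∈ U ↔ m.1 1 < L U (m.1 2) := by
    intro U hU m
    rw [hlt U hU]
    constructor
    · intro h; exact ⟨m, h, rfl, rfl⟩
    · rintro ⟨m', hm', h1, h2⟩
      rwa [← heq12 m' m h1 h2]
  refine ⟨fun U => ⟨L U.1, hL0 U.1, hmono U.1 U.2, hstrict U.1 U.2⟩, ⟨?_, ?_⟩, ?_⟩
  · -- injective
    intro U W h
    have hLeq : L U.1 = L W.1 := congrArg Subtype.val h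
    apply Subtype.ext
    ext m
    rw [hmemchar U.1 U.2 m, hmemchar W.1 W.2 m, hLeq]
  · -- surjective
    rintro ⟨l, hl0, hlm, hls⟩
    have hchain : ∀ k c, l (c + k) ≠ 0 → l (c + k) + k ≤ l c := by
      intro k
      induction k with
      | zero => intro c h; simp
      | succ k ih =>
        intro c h
        rw [show c + (k + 1) = c + k + 1 by omega] at h ⊢
        have h1 : l (c + k + 1) < l (c + k) := hls (c + k) h
        have h2 := ih c (by omega)
        omega
    have hfilt : Filt {m : T | m.1 1 < l (m.1 2)} := by
      intro m hm m' hrel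
      have hdom := dominance (d := d) m.2.1 m'.2.1 m.2.2 m'.2.2 hrel
      have hm2 : m.1 1 < l (m.1 2) := hm
      obtain ⟨k, hk⟩ : ∃ k, m.1 2 = m'.1 2 + k := ⟨m.1 2 - m'.1 2, by omega⟩
      rw [hk] at hm2
      have hnz : l (m'.1 2 + k) ≠ 0 := by omega
      have hch := hchain k (m'.1 2) hnz
      show m'.1 1 < l (m'.1 2)
      omega
    refine ⟨⟨{m : T | m.1 1 < l (m.1 2)}, hfilt⟩, ?_⟩
    apply Subtype.ext
    funext i
    show L {m : T | m.1 1 < l (m.1 2)} i = l i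
    have hQiff : ∀ b, Q {m : T | m.1 1 < l (m.1 2)} b i ↔ b < l i := by
      intro b
      constructor
      · rintro ⟨m, hm, rfl, rfl⟩; exact hm
      · intro hb
        have hnz : l i ≠ 0 := by omega
        have hbd : b + i ≤ d := by
          have := hchain i 0 (by simpa using hnz)
          simp at this
          omega
        refine ⟨⟨mk3 d b i, invars_mk3 d b i, deg_mk3 hbd⟩, ?_, ?_, ?_⟩
        · show (mk3 d b i) 1 < l ((mk3 d b i) 2)
          rw [mk3_apply, mk3_apply]
          simpa using hb
        · simp [mk3_apply]
        · simp [mk3_apply]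
    have hset : {b | ¬ Q {m : T | m.1 1 < l (m.1 2)} b i} = {b | l i ≤ b} := by
      ext b
      simp only [Set.mem_setOf_eq, hQiff b, not_lt]
    show sInf {b | ¬ Q {m : T | m.1 1 < l (m.1 2)} b i} = l i
    rw [hset]
    exact le_antisymm (Nat.sInf_le (Set.mem_setOf_eq ▸ le_rfl))
      (le_csInf ⟨l i, Set.mem_setOf_eq ▸ le_rfl⟩ fun b hb => hb)
  · -- order
    intro U W
    constructor
    · intro hsub i
      show L U.1 i ≤ L W.1 i
      rcases Nat.eq_zero_or_pos (L U.1 i) with h | h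
      · omega
      · obtain ⟨m, hm, h1, h2⟩ := (hlt U.1 U.2 (L U.1 i - 1) i).1 (by omega)
        have hw : Q W.1 (L U.1 i - 1) i := ⟨m, hsub hm, h1, h2⟩
        have := (hlt W.1 W.2 _ _).2 hw
        omega
    · intro hle m hm
      have h1 := (hmemchar U.1 U.2 m).1 hm
      have h2 : L U.1 (m.1 2) ≤ L W.1 (m.1 2) := hle (m.1 2)
      exact (hmemchar W.1 W.2 m).2 (lt_of_lt_of_le h1 h2)
end

section
/- If m and m' are monomials of M that are incomparable with respect to the partial order A_{·,·} (i.e. {m, m'} is an antichain), then m^k and m'^k are incomparable with respect to A_{·,·} for every positive integer k. -/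
def PS (m : Mon) (s : ℕ) : ℕ := ∑ i ∈ Finset.range s, m i

lemma PS_add (a b : Mon) (s : ℕ) : PS (a + b) s = PS a s + PS b s := by
  simp [PS, Finset.sum_add_distrib]
lemma PS_single (j c s : ℕ) : PS (Finsupp.single j c) s = if j < s then c else 0 := by
  simp [PS, Finsupp.single_apply, Finset.sum_ite_eq]
lemma PS_succ (m : Mon) (s : ℕ) : PS m (s + 1) = PS m s + m s := by
  simp [PS, Finset.sum_range_succ]
lemma PS_eq_deg (m : Mon) (s : ℕ) (h : ∀ i ∈ m.support, i < s) : PS m s = deg m := by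
  rw [deg, Finsupp.sum]
  exact (Finset.sum_subset (fun i hi => Finset.mem_range.2 (h i hi))
    (fun i _ hi => Finsupp.notMem_support_iff.1 hi)).symm
lemma deg_single (j c : ℕ) : deg (Finsupp.single j c) = c := by
  simp [deg, Finsupp.sum_single_index]

lemma key (N : ℕ) (b : Mon) (hb : ∀ i ∈ b.support, i < N) :
    ∀ K a, (∀ i ∈ a.support, i < N) → deg a = deg b →
    (∀ s, PS b s ≤ PS a s) →
    (∑ s ∈ Finset.range N, (PS a s - PS b s)) = K →
    Relation.ReflTransGen
      (fun x y => InVars N x ∧ InVars N y ∧ deg x = deg b ∧ deg y = deg b ∧ ElemMove x y) a b := by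
  intro K
  induction K using Nat.strong_induction_on with
  | _ K IH =>
  intro a ha hdeg hdom hK
  by_cases hab : a = b
  · subst hab; exact Relation.ReflTransGen.refl
  -- least index where a and b differ
  have hex : ∃ i, a i ≠ b i := by
    by_contra h; push_neg at h; exact hab (Finsupp.ext h)
  set i := Nat.find hex with hi_def
  have hi : a i ≠ b i := Nat.find_spec hex
  have hmin : ∀ t, t < i → a t = b t := by
    intro t ht
    by_contra h; exact absurd (Nat.find_min' hex h) (by omega)
  have hPSi : ∀ s, s ≤ i → PS a s = PS b s := by
    intro s hs
    refine Finset.sum_congr rfl fun t ht => hmin t ?_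
    have := Finset.mem_range.1 ht; omega
  have hlt : b i < a i := by
    have h1 := hdom (i + 1)
    have h2 := PS_succ a i
    have h3 := PS_succ b i
    have h4 := hPSi i le_rfl
    omega
  have hiN : i < N := ha i (Finsupp.mem_support_iff.2 (by omega))
  -- least s > i with equal prefix sums
  have hex2 : ∃ s, i < s ∧ PS a s = PS b s := by
    refine ⟨N, hiN, ?_⟩
    rw [PS_eq_deg a N ha, PS_eq_deg b N hb, hdeg]
  set s0 := Nat.find hex2 with hs0_def
  obtain ⟨hs0i, hs0eq⟩ : i < s0 ∧ PS a s0 = PS b s0 := Nat.find_spec hex2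
  have hs0min : ∀ s, i < s → s < s0 → PS b s < PS a s := by
    intro s h1 h2
    have := Nat.find_min hex2 h2
    have hd := hdom s
    omega
  have hs0N : s0 ≤ N := Nat.find_min' hex2 ⟨hiN, by
    rw [PS_eq_deg a N ha, PS_eq_deg b N hb, hdeg]⟩
  have hs0i1 : i + 1 < s0 := by
    rcases Nat.lt_or_ge (i+1) s0 with h | h
    · exact h
    · exfalso
      have : s0 = i + 1 := by omega
      have h2 := PS_succ a i
      have h3 := PS_succ b i
      have h4 := hPSi i le_rfl
      rw [this] at hs0eq; omega
  set j := s0 - 1 with hj_def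
  have hij : i < j := by omega
  have hjN : j < N := by omega
  -- the move
  have hle : Finsupp.single i 1 ≤ a := by
    rw [Finsupp.single_le_iff]; omega
  set a' := a - Finsupp.single i 1 + Finsupp.single j 1 with ha'_def
  have heq : a' + Finsupp.single i 1 = a + Finsupp.single j 1 := by
    rw [ha'_def, add_right_comm, tsub_add_cancel_of_le hle]
  have hPS' : ∀ s, PS a' s + (if i < s then 1 else 0) = PS a s + (if j < s then 1 else 0) := by
    intro s
    have := congrArg (fun m => PS m s) heq
    simpa [PS_add, PS_single] using this
  have hdom' : ∀ s, PS b s ≤ PS a' s := by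
    intro s
    have h := hPS' s
    have hd := hdom s
    split_ifs at h with h1 h2 h2
    · -- i < s, j < s
      omega
    · -- i < s ≤ j
      have : PS b s < PS a s := hs0min s h1 (by omega)
      omega
    · omega
    · omega
  have hdeg' : deg a' = deg b := by
    have := congrArg deg heq
    simp only [deg_add, deg_single] at this
    omega
  have hvars' : ∀ t ∈ a'.support, t < N := by
    intro t ht
    by_contra hc
    push_neg at hc
    have h1 : a' t ≠ 0 := Finsupp.mem_support_iff.1 ht
    have h2 := congrArg (fun m => m t) heq
    simp only [Finsupp.add_apply, Finsupp.single_apply] at h2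
    have h3 : a t = 0 := by
      by_contra hc2
      exact absurd (ha t (Finsupp.mem_support_iff.2 hc2)) (by omega)
    have h4 : i ≠ t := by omega
    have h5 : j ≠ t := by omega
    simp [h3, h4, h5] at h2
    exact h1 h2
  have hmeas : ∑ s ∈ Finset.range N, (PS a' s - PS b s) < K := by
    rw [← hK]
    refine Finset.sum_lt_sum (fun s _ => ?_) ⟨i + 1, Finset.mem_range.2 (by omega), ?_⟩
    · have h := hPS' s; have := hdom' s; have := hdom s; split_ifs at h <;> omega
    · have h := hPS' (i + 1)
      have h2 := PS_succ a i
      have h3 := PS_succ b i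
      have h4 := hPSi i le_rfl
      have h5 : i < i + 1 := by omega
      have h6 : ¬ j < i + 1 := by omega
      rw [if_pos h5, if_neg h6] at h
      omega
  refine Relation.ReflTransGen.head ⟨ha, hvars', hdeg, hdeg', i, j, hij, heq.symm⟩ ?_
  exact IH _ hmeas a' hvars' hdeg' hdom' rfl


lemma elem_dom {x y : Mon} (h : ElemMove x y) (s : ℕ) : PS y s ≤ PS x s := by
  obtain ⟨i, j, hij, heq⟩ := h
  have := congrArg (fun m => PS m s) heq
  simp only [PS_add, PS_single] at this
  split_ifs at this <;> omega

lemma asub_dom {n d : ℕ} {x y : Mon} (h : Asub n d x y) (s : ℕ) : PS y s ≤ PS x s := by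
  induction h with
  | refl => exact le_refl _
  | tail _ hstep IH => exact le_trans (elem_dom hstep.2.2.2.2 s) IH

lemma aall_dom {x y : Mon} (h : Aall x y) (s : ℕ) : PS y s ≤ PS x s := by
  induction h with
  | refl => exact le_refl _
  | tail _ hstep IH =>
    refine le_trans ?_ IH
    rcases hstep with ⟨t, rfl⟩ | ⟨n, d, hsub⟩
    · rw [PS_add]; omega
    · exact asub_dom hsub s

lemma dom_aall {a b : Mon} (hdom : ∀ s, PS b s ≤ PS a s) : Aall a b := by
  obtain ⟨N, hNa, hNb⟩ : ∃ N, (∀ i ∈ a.support, i < N) ∧ (∀ i ∈ b.support, i < N) := by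
    refine ⟨(a.support ∪ b.support).sup id + 1, fun i hi => ?_, fun i hi => ?_⟩ <;>
      exact Nat.lt_succ_of_le (Finset.le_sup (f := id) (Finset.mem_union.2 (by tauto)))
  have hdegle : deg b ≤ deg a := by
    have := hdom N; rwa [PS_eq_deg a N hNa, PS_eq_deg b N hNb] at this
  set e := deg a - deg b with he
  set b' := b + Finsupp.single N e with hb'
  have hb'N : ∀ i ∈ b'.support, i < N + 1 := by
    intro t ht
    have h1 : b' t ≠ 0 := Finsupp.mem_support_iff.1 ht
    by_contra hc
    push_neg at hc
    have h3 : b t = 0 := by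
      by_contra hc2
      exact absurd (hNb t (Finsupp.mem_support_iff.2 hc2)) (by omega)
    have h4 : N ≠ t := by omega
    simp [hb', Finsupp.add_apply, Finsupp.single_apply, h3, h4] at h1
  have hdegb' : deg a = deg b' := by
    rw [hb', deg_add, deg_single]; omega
  have hdomb' : ∀ s, PS b' s ≤ PS a s := by
    intro s
    rcases Nat.lt_or_ge N s with h | h
    · have h1 : ∀ i ∈ a.support, i < s := fun i hi => lt_of_lt_of_le (hNa i hi) (by omega)
      have h2 : ∀ i ∈ b'.support, i < s := fun i hi => lt_of_lt_of_le (hb'N i hi) (by omega)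
      rw [PS_eq_deg a s h1, PS_eq_deg b' s h2, hdegb']
    · have heqs : PS b' s = PS b s := by
        rw [hb', PS_add, PS_single, if_neg (by omega), add_zero]
      rw [heqs]; exact hdom s
  have havars : ∀ i ∈ a.support, i < N + 1 := fun i hi => lt_of_lt_of_le (hNa i hi) (by omega)
  have hchain := key (N + 1) b' hb'N _ a havars hdegb' hdomb' rfl
  have hsub : Asub (N + 1) (deg b') a b' := hchain
  exact Relation.ReflTransGen.head (Or.inr ⟨N + 1, deg b', hsub⟩)
    (Relation.ReflTransGen.single (Or.inl ⟨Finsupp.single N e, rfl⟩))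

lemma PS_smul (k : ℕ) (m : Mon) (s : ℕ) : PS (k • m) s = k * PS m s := by
  simp [PS, Finset.mul_sum]

lemma cancel_pow {a b : Mon} {k : ℕ} (hk : 0 < k) (h : Aall (k • a) (k • b)) : Aall a b := by
  apply dom_aall
  intro s
  have := aall_dom h s
  rw [PS_smul, PS_smul] at this
  exact Nat.le_of_mul_le_mul_left this hk

/-- If `{m, m'}` is an antichain with respect to `A_{·,·}`,
then so is `{m^k, m'^k}` for every positive integer `k` (multiplicatively,
`m^k` is the exponent vector `k • m`). -/
theorem stmt8 (m m' : Mon) (h₁ : ¬ Aall m m') (h₂ : ¬ Aall m' m)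
    (k : ℕ) (hk : 0 < k) :
    ¬ Aall (k • m) (k • m') ∧ ¬ Aall (k • m') (k • m) := by
  exact ⟨fun h => h₁ (cancel_pow hk h), fun h => h₂ (cancel_pow hk h)⟩
end

section
/- For every positive integer n, the partial order A_{n,·} on M^n equals the intersection of all term orders S on M^n satisfying x_1 > x_2 > ⋯ > x_n with respect to S; that is, (m, m') ∈ A_{n,·} if and only if m ≥ m' for every such term order S. -/
/-- Total degree of a monomial in `n` variables, identified with its exponent
vector in `ℕ^n`. -/
def degF {n : ℕ} (m : Fin n → ℕ) : ℕ := ∑ i, m i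

/-- Elementary move: `m = (x_i / x_j) · m'` for some `i < j` with `x_j ∣ m'`. -/
def ElemMoveF {n : ℕ} (m m' : Fin n → ℕ) : Prop :=
  ∃ i j : Fin n, i < j ∧ m + Pi.single j 1 = m' + Pi.single i 1

/-- The strongly stable partial order `A_{n,d}`: reflexive–transitive closure of
elementary moves on monomials of degree `d`. -/
def AndF (n d : ℕ) (m m' : Fin n → ℕ) : Prop :=
  Relation.ReflTransGen (fun a b => degF a = d ∧ degF b = d ∧ ElemMoveF a b) m m'

/-- The divisibility order `D` on `Mⁿ`: `(m, m') ∈ D` iff `m'` divides `m`. -/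
def DvdF {n : ℕ} (m m' : Fin n → ℕ) : Prop := ∃ t, m = m' + t

/-- `A_{n,·} = rtr(D ∪ ⋃_d A_{n,d})`. -/
def AnDotF (n : ℕ) (m m' : Fin n → ℕ) : Prop :=
  Relation.ReflTransGen (fun a b => DvdF a b ∨ ∃ d, AndF n d a b) m m'

/-- A term order on `Mⁿ`: a linear order such that `1` is the smallest element
and which is compatible with multiplication. -/
def IsTermOrder {n : ℕ} (le : (Fin n → ℕ) → (Fin n → ℕ) → Prop) : Prop :=
  IsLinearOrder (Fin n → ℕ) le ∧ (∀ m, le 0 m) ∧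
    ∀ m m' t, le m m' → le (t + m) (t + m')

/-!
Write `S_k(m)` for the degree of `m` in `x_1, …, x_k`. Both kinds of steps generating `A_{n,·}`
(dividing off a monomial, and an elementary move) go down in every term order with
`x_1 > ⋯ > x_n`. Conversely, for each `k` the order comparing `S_k` first and breaking ties
lexicographically is such a term order, so lying above `m'` in all of them forces
`S_k(m') ≤ S_k(m)` for every `k`. This dominance already gives `(m, m') ∈ A_{n,·}`: cutting `m`
down to its first `deg m'` units of degree is a divisibility step that keeps the dominance, and
between monomials of equal degree, moving one unit from the first variable where the partial
sums differ to the next one is an elementary move that keeps the dominance and lowers `∑_k S_k`.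
-/

open Finset Relation

namespace StronglyStable

variable {n : ℕ}

/-- The degree of `a` in `x_1, …, x_k`; the index `i : Fin n` stands for `x_{i+1}`. -/
def partialSum (a : Fin n → ℕ) (k : ℕ) : ℕ := ∑ i : Fin n with i.val < k, a i

lemma partialSum_add (a b : Fin n → ℕ) (k : ℕ) :
    partialSum (a + b) k = partialSum a k + partialSum b k := by
  simp [partialSum, sum_add_distrib]

lemma partialSum_zero_right (a : Fin n → ℕ) : partialSum a 0 = 0 := by
  simp [partialSum]

lemma partialSum_succ (a : Fin n → ℕ) {k : ℕ} (hk : k < n) :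
    partialSum a (k + 1) = partialSum a k + a ⟨k, hk⟩ := by
  have : univ.filter (fun i : Fin n => i.val < k + 1) =
      insert ⟨k, hk⟩ (univ.filter fun i => i.val < k) := by
    ext i; simp [Fin.ext_iff]; omega
  rw [partialSum, this, sum_insert (by simp), add_comm, partialSum]

lemma partialSum_of_le (a : Fin n → ℕ) {k : ℕ} (hk : n ≤ k) : partialSum a k = degF a := by
  rw [partialSum, filter_true_of_mem fun i _ => i.isLt.trans_le hk, degF]

lemma partialSum_le_degF (a : Fin n → ℕ) (k : ℕ) : partialSum a k ≤ degF a :=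
  sum_le_sum_of_subset (filter_subset _ _)

lemma partialSum_single (i : Fin n) (k : ℕ) :
    partialSum (Pi.single i 1) k = if (i : ℕ) < k then 1 else 0 := by
  simp [partialSum, Pi.single_apply]

lemma eq_of_forall_partialSum_eq {a b : Fin n → ℕ} (h : ∀ k, partialSum a k = partialSum b k) :
    a = b := by
  funext i
  have := h (i + 1)
  rw [partialSum_succ a i.isLt, partialSum_succ b i.isLt, h i] at this
  simpa using this

lemma degF_add (a b : Fin n → ℕ) : degF (a + b) = degF a + degF b := by
  simp [degF, sum_add_distrib]

lemma degF_single (i : Fin n) : degF (Pi.single i 1 : Fin n → ℕ) = 1 := by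
  simp [degF]

lemma ElemMoveF.degF_eq {a b : Fin n → ℕ} (h : ElemMoveF a b) : degF a = degF b := by
  obtain ⟨i, j, -, h⟩ := h
  simpa [degF_add, degF_single] using congrArg degF h

lemma elemMoveF_add_single (u : Fin n → ℕ) {i j : Fin n} (hij : i < j) :
    ElemMoveF (u + Pi.single i 1) (u + Pi.single j 1) :=
  ⟨i, j, hij, add_right_comm _ _ _⟩

def Dominates (a b : Fin n → ℕ) : Prop := ∀ k, partialSum b k ≤ partialSum a k

lemma le_of_reflTransGen {α : Type*} {r le : α → α → Prop} [Std.Refl le] [IsTrans α le]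
    (hr : ∀ a b, r a b → le b a) {a b : α} (h : ReflTransGen r a b) : le b a := by
  induction h with
  | refl => exact refl_of le a
  | tail _ hbc ih => exact trans_of le (hr _ _ hbc) ih

section Soundness

variable {le : (Fin n → ℕ) → (Fin n → ℕ) → Prop}

lemma IsTermOrder.le_of_add_le_add_left (hle : IsTermOrder le) {t a b : Fin n → ℕ}
    (h : le (t + a) (t + b)) : le a b := by
  have := hle.1
  rcases total_of le a b with hab | hba
  · exact hab
  · obtain rfl : a = b := add_left_cancel (antisymm h (hle.2.2 b a t hba))
    exact refl_of le a

lemma IsTermOrder.le_of_anDotF (hle : IsTermOrder le)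
    (hsingle : ∀ i j : Fin n, i < j → le (Pi.single j 1) (Pi.single i 1))
    {m m' : Fin n → ℕ} (h : AnDotF n m m') : le m' m := by
  have := hle.1
  refine le_of_reflTransGen (fun a b hab => ?_) h
  rcases hab with ⟨t, rfl⟩ | ⟨d, hab⟩
  · simpa using hle.2.2 0 t b (hle.2.1 t)
  · refine le_of_reflTransGen (fun a b ⟨_, _, i, j, hij, hab⟩ => ?_) hab
    apply IsTermOrder.le_of_add_le_add_left hle (t := Pi.single j 1)
    rw [add_comm _ a, hab, add_comm _ b]
    exact hle.2.2 _ _ b (hsingle i j hij)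

end Soundness

lemma isTermOrder_of_injective {β : Type*} [AddCommMonoid β] [LinearOrder β]
    [IsOrderedCancelAddMonoid β] (f : (Fin n → ℕ) → β) (hf : Function.Injective f)
    (hadd : ∀ a b, f (a + b) = f a + f b) (hzero : ∀ a, f 0 ≤ f a) :
    IsTermOrder fun a b => f a ≤ f b := by
  refine ⟨{ refl := fun a => le_refl (f a)
            trans := fun _ _ _ => le_trans
            antisymm := fun _ _ h h' => hf (le_antisymm h h')
            total := fun a b => le_total (f a) (f b) }, hzero, fun a b t h => ?_⟩
  simpa only [hadd] using add_le_add_right h (f t)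

def weightLex (k : ℕ) (a : Fin n → ℕ) : ℕ ×ₗ Lex (Fin n → ℕ) := toLex (partialSum a k, toLex a)

lemma isTermOrder_weightLex (k : ℕ) :
    IsTermOrder fun a b : Fin n → ℕ => weightLex k a ≤ weightLex k b := by
  refine isTermOrder_of_injective _ (fun a b h => ?_) (fun a b => ?_) (fun a => ?_)
  · simpa [weightLex] using congrArg (fun x => ofLex (ofLex x).2) h
  · simp only [weightLex, partialSum_add]; rfl
  · exact Prod.Lex.toLex_mono ⟨by simp [partialSum], Pi.toLex_monotone fun i => Nat.zero_le (a i)⟩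

lemma toLex_single_lt_single {i j : Fin n} (hij : i < j) :
    toLex (Pi.single j 1 : Fin n → ℕ) < toLex (Pi.single i 1) :=
  ⟨i, fun l hl => by simp [hl.ne, (hl.trans hij).ne], by simp [hij.ne]⟩

lemma weightLex_single_lt_single (k : ℕ) {i j : Fin n} (hij : i < j) :
    weightLex k (Pi.single j 1) < weightLex k (Pi.single i 1) := by
  have := Fin.lt_def.mp hij
  rw [weightLex, weightLex, Prod.Lex.toLex_lt_toLex', partialSum_single, partialSum_single]
  exact ⟨by split_ifs <;> omega, fun _ => toLex_single_lt_single hij⟩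

lemma dominates_of_forall_isTermOrder {m m' : Fin n → ℕ}
    (H : ∀ le : (Fin n → ℕ) → (Fin n → ℕ) → Prop, IsTermOrder le →
      (∀ i j : Fin n, i < j →
        le (Pi.single j 1) (Pi.single i 1) ∧ ¬ le (Pi.single i 1) (Pi.single j 1)) →
      le m' m) :
    Dominates m m' := fun k => by
  have := H _ (isTermOrder_weightLex k) fun i j hij =>
    ⟨(weightLex_single_lt_single k hij).le, (weightLex_single_lt_single k hij).not_ge⟩
  exact Prod.Lex.monotone_fst _ _ this

/-- Keep the first `D` units of degree of `a`, reading the variables in order. -/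
def truncate (a : Fin n → ℕ) (D : ℕ) : Fin n → ℕ := fun i => min (a i) (D - partialSum a i)

lemma partialSum_truncate (a : Fin n → ℕ) (D k : ℕ) :
    partialSum (truncate a D) k = min (partialSum a k) D := by
  induction k with
  | zero => simp [partialSum_zero_right]
  | succ k ih =>
    rcases lt_or_ge k n with hk | hk
    · rw [partialSum_succ _ hk, partialSum_succ _ hk, ih]
      simp only [truncate]
      omega
    · rw [partialSum_of_le _ hk, partialSum_of_le _ (by omega)] at ih
      rwa [partialSum_of_le _ (by omega), partialSum_of_le _ (by omega)]

lemma dvdF_truncate (a : Fin n → ℕ) (D : ℕ) : DvdF a (truncate a D) :=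
  exists_add_of_le fun _ => min_le_left _ _

lemma dominates_truncate {m m' : Fin n → ℕ} (h : Dominates m m') :
    Dominates (truncate m (degF m')) m' := fun k => by
  rw [partialSum_truncate]
  exact le_min (h k) (partialSum_le_degF m' k)

lemma degF_truncate {m m' : Fin n → ℕ} (h : Dominates m m') :
    degF (truncate m (degF m')) = degF m' := by
  have hle := h n
  rw [partialSum_of_le _ le_rfl, partialSum_of_le _ le_rfl] at hle
  rw [← partialSum_of_le _ le_rfl, partialSum_truncate, partialSum_of_le _ le_rfl]
  omega

def sumPartialSums (a : Fin n → ℕ) : ℕ := ∑ k ∈ range (n + 1), partialSum a k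

lemma exists_partialSum_lt {m m' : Fin n → ℕ} (h : Dominates m m') (hdeg : degF m = degF m')
    (hne : m ≠ m') :
    ∃ c : Fin n, (c : ℕ) + 1 < n ∧
      partialSum m' (c + 1) < partialSum m (c + 1) ∧ 0 < m c := by
  have hex : ∃ k, partialSum m' k < partialSum m k := by
    by_contra! hge
    exact hne (eq_of_forall_partialSum_eq fun k => le_antisymm (hge k) (h k))
  obtain ⟨c, hc⟩ : ∃ c, Nat.find hex = c + 1 := Nat.exists_eq_succ_of_ne_zero fun h0 => by
    simpa [h0, partialSum_zero_right] using Nat.find_spec hex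
  have hlt := Nat.find_spec hex
  have heq : partialSum m c = partialSum m' c :=
    le_antisymm (not_lt.mp (Nat.find_min hex (by omega))) (h c)
  rw [hc] at hlt
  have hcn : c + 1 < n := by
    by_contra! hn
    rw [partialSum_of_le _ hn, partialSum_of_le _ hn, hdeg] at hlt
    exact hlt.false
  refine ⟨⟨c, by omega⟩, hcn, hlt, ?_⟩
  rw [partialSum_succ _ (by omega), partialSum_succ _ (by omega), heq] at hlt
  omega

lemma exists_elemMoveF_dominates {m m' : Fin n → ℕ} (h : Dominates m m') (hdeg : degF m = degF m')
    (hne : m ≠ m') :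
    ∃ m'', ElemMoveF m m'' ∧ Dominates m'' m' ∧ sumPartialSums m'' < sumPartialSums m := by
  obtain ⟨c, hc, hlt, hpos⟩ := exists_partialSum_lt h hdeg hne
  obtain ⟨u, rfl⟩ : ∃ u, m = u + Pi.single c 1 := by
    refine ⟨m - Pi.single c 1, (tsub_add_cancel_of_le fun i => ?_).symm⟩
    rcases eq_or_ne i c with rfl | hi
    · simpa using hpos.nat_succ_le
    · simp [hi]
  have hsum (k : ℕ) : partialSum (u + Pi.single ⟨c + 1, hc⟩ 1) k + (if k = c + 1 then 1 else 0) =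
      partialSum (u + Pi.single c 1) k := by
    simp only [partialSum_add, partialSum_single]
    split_ifs <;> omega
  have hshift := hsum (c + 1)
  rw [if_pos rfl] at hshift
  refine ⟨_, elemMoveF_add_single u (show c < ⟨c + 1, hc⟩ from Nat.lt_succ_self c), fun k => ?_, ?_⟩
  · rcases eq_or_ne k (c + 1) with rfl | hk
    · omega
    · simpa [← hsum k, hk] using h k
  · refine sum_lt_sum (fun k _ => (hsum k).symm ▸ Nat.le_add_right _ _)
      ⟨c + 1, mem_range.mpr (by omega), by omega⟩

lemma andF_of_dominates {m m' : Fin n → ℕ} (h : Dominates m m') (hdeg : degF m = degF m') :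
    AndF n (degF m') m m' := by
  by_cases hne : m = m'
  · exact hne ▸ ReflTransGen.refl
  obtain ⟨m'', hmove, hdom, hlt⟩ := exists_elemMoveF_dominates h hdeg hne
  have hdeg'' : degF m'' = degF m' := (ElemMoveF.degF_eq hmove).symm.trans hdeg
  exact .head ⟨hdeg, hdeg'', hmove⟩ (andF_of_dominates hdom hdeg'')
termination_by sumPartialSums m

lemma anDotF_of_dominates {m m' : Fin n → ℕ} (h : Dominates m m') : AnDotF n m m' :=
  .head (.inl (dvdF_truncate m _))
    (.single (.inr ⟨_, andF_of_dominates (dominates_truncate h) (degF_truncate h)⟩))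

end StronglyStable

theorem stmt11_general (n : ℕ) (m m' : Fin n → ℕ) :
    AnDotF n m m' ↔
      ∀ le : (Fin n → ℕ) → (Fin n → ℕ) → Prop, IsTermOrder le →
        (∀ i j : Fin n, i < j →
          le (Pi.single j 1) (Pi.single i 1) ∧ ¬ le (Pi.single i 1) (Pi.single j 1)) →
        le m' m :=
  ⟨fun h _ hle hsingle =>
      StronglyStable.IsTermOrder.le_of_anDotF hle (fun i j hij => (hsingle i j hij).1) h,
    fun H => StronglyStable.anDotF_of_dominates (StronglyStable.dominates_of_forall_isTermOrder H)⟩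

/-- For every positive integer `n`, the partial order `A_{n,·}`
on `Mⁿ` is the intersection of all term orders `S` with `x₁ > x₂ > ⋯ > x_n`:
`(m, m') ∈ A_{n,·}` iff `m ≥ m'` for every such term order. -/
theorem stmt11 (n : ℕ) (hn : 0 < n) (m m' : Fin n → ℕ) :
    AnDotF n m m' ↔
      ∀ le : (Fin n → ℕ) → (Fin n → ℕ) → Prop, IsTermOrder le →
        (∀ i j : Fin n, i < j →
          le (Pi.single j 1) (Pi.single i 1) ∧ ¬ le (Pi.single i 1) (Pi.single j 1)) →
        le m' m :=
  stmt11_general n m m'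
end

section
/- Let n be a positive integer and let m ≠ m' be monomials in M^n. Then (m, m') belongs to every degree-compatible term order on M^n satisfying x_1 > x_2 > ⋯ > x_n if and only if either deg m > deg m', or deg m = deg m' = d and (m, m') ∈ A_{n,d}. Equivalently, the intersection of all such term orders is the ordinal sum ⨁_{d=0}^∞ A_{n,d}. -/
namespace Stmt13Aux

open Finset

variable {n : ℕ}

lemma degF_add (a b : Fin n → ℕ) : degF (a + b) = degF a + degF b := by
  simp [degF, Finset.sum_add_distrib]

lemma degF_single (i : Fin n) : degF (Pi.single i 1 : Fin n → ℕ) = 1 := by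
  simp [degF, Pi.single_apply]

lemma degF_eq_zero {a : Fin n → ℕ} (h : degF a = 0) : a = 0 := by
  funext k
  have := Finset.sum_eq_zero_iff.mp h k (mem_univ k)
  simpa using this

/-- Prefix sum `∑_{k ≤ c} a k`. -/
def PP (c : Fin n) (a : Fin n → ℕ) : ℕ := ∑ k ∈ univ.filter (fun k => k ≤ c), a k

lemma PP_add (c : Fin n) (a b : Fin n → ℕ) : PP c (a + b) = PP c a + PP c b := by
  simp [PP, Finset.sum_add_distrib]

lemma PP_single (c i : Fin n) : PP c (Pi.single i 1 : Fin n → ℕ) = if i ≤ c then 1 else 0 := by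
  simp [PP, Pi.single_apply]

/-- Weighted sum. -/
def Sw (w a : Fin n → ℕ) : ℕ := ∑ k, w k * a k

lemma Sw_add (w a b : Fin n → ℕ) : Sw w (a + b) = Sw w a + Sw w b := by
  simp [Sw, mul_add, Finset.sum_add_distrib]

lemma Sw_single (w : Fin n → ℕ) (i : Fin n) : Sw w (Pi.single i 1) = w i := by
  simp [Sw, Pi.single_apply]

/-- Strict lexicographic order on exponent vectors (big exponents early = big). -/
def LexLt (a b : Fin n → ℕ) : Prop := ∃ i, (∀ j, j < i → a j = b j) ∧ a i < b i

lemma LexLt_trans {a b c : Fin n → ℕ} (h1 : LexLt a b) (h2 : LexLt b c) : LexLt a c := by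
  obtain ⟨i, hi, hlt⟩ := h1
  obtain ⟨i', hi', hlt'⟩ := h2
  rcases lt_trichotomy i i' with h | h | h
  · exact ⟨i, fun j hj => (hi j hj).trans (hi' j (hj.trans h)), by rw [← hi' i h]; exact hlt⟩
  · subst h
    exact ⟨i, fun j hj => (hi j hj).trans (hi' j hj), lt_trans hlt hlt'⟩
  · exact ⟨i', fun j hj => (hi j (hj.trans h)).trans (hi' j hj),
      by rw [hi i' h]; exact hlt'⟩

lemma LexLt_irrefl (a : Fin n → ℕ) : ¬ LexLt a a := by
  rintro ⟨i, _, h⟩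
  exact lt_irrefl _ h

lemma LexLt_asymm {a b : Fin n → ℕ} (h1 : LexLt a b) (h2 : LexLt b a) : False :=
  LexLt_irrefl a (LexLt_trans h1 h2)

lemma LexLt_total {a b : Fin n → ℕ} (h : a ≠ b) : LexLt a b ∨ LexLt b a := by
  have hs : (Finset.univ.filter (fun k => a k ≠ b k)).Nonempty := by
    by_contra hh
    apply h
    funext k
    by_contra hk
    exact hh ⟨k, by simp [hk]⟩
  set i := (Finset.univ.filter (fun k => a k ≠ b k)).min' hs
  have himem : a i ≠ b i := by
    have := (Finset.univ.filter (fun k => a k ≠ b k)).min'_mem hs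
    simpa using this
  have hlow : ∀ l : Fin n, l < i → a l = b l := by
    intro l hl
    by_contra hk
    exact absurd (Finset.min'_le _ l (by simp [hk])) (not_le.mpr hl)
  rcases Nat.lt_or_ge (a i) (b i) with h' | h'
  · exact Or.inl ⟨i, hlow, h'⟩
  · exact Or.inr ⟨i, fun j hj => (hlow j hj).symm, by omega⟩

lemma LexLt_add (t : Fin n → ℕ) {a b : Fin n → ℕ} (h : LexLt a b) : LexLt (t + a) (t + b) := by
  obtain ⟨i, hi, hlt⟩ := h
  exact ⟨i, fun j hj => by show t j + a j = t j + b j; rw [hi j hj],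
    Nat.add_lt_add_left hlt (t i)⟩

lemma LexLt_single {i j : Fin n} (hij : i < j) :
    LexLt (Pi.single j 1 : Fin n → ℕ) (Pi.single i 1) := by
  refine ⟨i, fun l hl => ?_, ?_⟩
  · simp [Pi.single_apply, (hl.trans hij).ne, hl.ne]
  · simp [Pi.single_apply, hij.ne']

/-- The term order: compare degree, then weight, then lexicographically. -/
def TLe (w : Fin n → ℕ) (a b : Fin n → ℕ) : Prop :=
  degF a < degF b ∨ (degF a = degF b ∧
    (Sw w a < Sw w b ∨ (Sw w a = Sw w b ∧ (a = b ∨ LexLt a b))))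

lemma TLe_refl (w a : Fin n → ℕ) : TLe w a a :=
  Or.inr ⟨rfl, Or.inr ⟨rfl, Or.inl rfl⟩⟩

lemma TLe_trans (w : Fin n → ℕ) : ∀ a b c, TLe w a b → TLe w b c → TLe w a c := by
  rintro a b c (h1 | ⟨e1, h1⟩) (h2 | ⟨e2, h2⟩)
  · exact Or.inl (lt_trans h1 h2)
  · exact Or.inl (e2 ▸ h1)
  · exact Or.inl (e1 ▸ h2)
  · refine Or.inr ⟨e1.trans e2, ?_⟩
    rcases h1 with h1 | ⟨f1, h1⟩ <;> rcases h2 with h2 | ⟨f2, h2⟩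
    · exact Or.inl (lt_trans h1 h2)
    · exact Or.inl (f2 ▸ h1)
    · exact Or.inl (f1 ▸ h2)
    · refine Or.inr ⟨f1.trans f2, ?_⟩
      rcases h1 with rfl | h1
      · exact h2
      · rcases h2 with rfl | h2
        · exact Or.inr h1
        · exact Or.inr (LexLt_trans h1 h2)

lemma TLe_antisymm (w : Fin n → ℕ) : ∀ a b, TLe w a b → TLe w b a → a = b := by
  rintro a b (h1 | ⟨e1, h1⟩) (h2 | ⟨e2, h2⟩)
  · omega
  · omega
  · omega
  · rcases h1 with h1 | ⟨f1, h1⟩ <;> rcases h2 with h2 | ⟨f2, h2⟩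
    · omega
    · omega
    · omega
    · rcases h1 with rfl | h1
      · rfl
      · rcases h2 with h2 | h2
        · exact h2.symm
        · exact absurd (LexLt_trans h1 h2) (LexLt_irrefl a)

lemma TLe_total (w : Fin n → ℕ) : ∀ a b, TLe w a b ∨ TLe w b a := by
  intro a b
  rcases Nat.lt_trichotomy (degF a) (degF b) with h | h | h
  · exact Or.inl (Or.inl h)
  · rcases Nat.lt_trichotomy (Sw w a) (Sw w b) with h' | h' | h'
    · exact Or.inl (Or.inr ⟨h, Or.inl h'⟩)
    · by_cases hab : a = b
      · exact Or.inl (Or.inr ⟨h, Or.inr ⟨h', Or.inl hab⟩⟩)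
      · rcases LexLt_total hab with hl | hl
        · exact Or.inl (Or.inr ⟨h, Or.inr ⟨h', Or.inr hl⟩⟩)
        · exact Or.inr (Or.inr ⟨h.symm, Or.inr ⟨h'.symm, Or.inr hl⟩⟩)
    · exact Or.inr (Or.inr ⟨h.symm, Or.inl h'⟩)
  · exact Or.inr (Or.inl h)

lemma TLe_isTermOrder (w : Fin n → ℕ) : IsTermOrder (TLe w) := by
  have hlin : IsLinearOrder (Fin n → ℕ) (TLe w) :=
    { refl := TLe_refl w
      trans := TLe_trans w
      antisymm := TLe_antisymm w
      total := TLe_total w }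
  refine ⟨hlin, ?_, ?_⟩
  · intro a
    rcases Nat.eq_zero_or_pos (degF a) with h | h
    · right
      refine ⟨by simp [degF_eq_zero h, degF], Or.inr ⟨by simp [degF_eq_zero h, Sw], ?_⟩⟩
      exact Or.inl (degF_eq_zero h).symm
    · left
      simpa [degF] using h
  · intro a b t h
    rcases h with h | ⟨e1, h⟩
    · left
      rw [degF_add, degF_add]
      omega
    · refine Or.inr ⟨by rw [degF_add, degF_add, e1], ?_⟩
      rcases h with h | ⟨f1, h⟩
      · left
        rw [Sw_add, Sw_add]
        omega
      · refine Or.inr ⟨by rw [Sw_add, Sw_add, f1], ?_⟩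
        rcases h with rfl | h
        · exact Or.inl rfl
        · exact Or.inr (LexLt_add t h)

lemma TLe_var (w : Fin n → ℕ) (hw : ∀ k l : Fin n, k ≤ l → w l ≤ w k) (i j : Fin n)
    (hij : i < j) :
    TLe w (Pi.single j 1) (Pi.single i 1) ∧ ¬ TLe w (Pi.single i 1) (Pi.single j 1) := by
  have hdeq : degF (Pi.single j 1 : Fin n → ℕ) = degF (Pi.single i 1 : Fin n → ℕ) := by
    rw [degF_single, degF_single]
  have hSle : Sw w (Pi.single j 1) ≤ Sw w (Pi.single i 1) := by
    rw [Sw_single, Sw_single]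
    exact hw i j hij.le
  have hne' : (Pi.single j 1 : Fin n → ℕ) ≠ Pi.single i 1 := by
    intro hcon
    have := congrFun hcon i
    simp [Pi.single_apply, hij.ne'] at this
  constructor
  · refine Or.inr ⟨hdeq, ?_⟩
    rcases lt_or_eq_of_le hSle with h | h
    · exact Or.inl h
    · exact Or.inr ⟨h, Or.inr (LexLt_single hij)⟩
  · rintro (h | ⟨e1, h | ⟨f1, h | h⟩⟩)
    · omega
    · omega
    · exact hne' h.symm
    · exact LexLt_asymm h (LexLt_single hij)

lemma TLe_deg (w : Fin n → ℕ) (a b : Fin n → ℕ) (h : degF b < degF a) : TLe w b a :=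
  Or.inl h

/-- The transfer lemma: prefix-sum domination implies Borel-order comparability. -/
lemma transfer : ∀ (N : ℕ) (m m' : Fin n → ℕ), (∑ i, (PP i m - PP i m')) ≤ N →
    degF m = degF m' → (∀ i, PP i m' ≤ PP i m) → AndF n (degF m) m m' := by
  intro N
  induction N with
  | zero =>
    intro m m' hN hdeg hdom
    by_cases hmm : m = m'
    · subst hmm
      exact Relation.ReflTransGen.refl
    · exfalso
      -- find the first index where they differ; there prefix sums differ strictly
      have hs : (univ.filter (fun k => m k ≠ m' k)).Nonempty := by
        by_contra hh
        apply hmm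
        funext k
        by_contra hk
        exact hh ⟨k, by simp [hk]⟩
      set i := (univ.filter (fun k => m k ≠ m' k)).min' hs with hi
      have himem : m i ≠ m' i := by
        have := (univ.filter (fun k => m k ≠ m' k)).min'_mem hs
        simpa using this
      have hlow : ∀ l : Fin n, l < i → m l = m' l := by
        intro l hl
        by_contra hk
        exact absurd (Finset.min'_le _ l (by simp [hk])) (not_le.mpr hl)
      -- PP i m' < PP i m  or  PP i m < PP i m'; either way sum of diffs > 0 fails... 
      -- we know domination, so PP i m' ≤ PP i m and they differ
      have hsplit : ∀ a : Fin n → ℕ, PP i a = (∑ k ∈ univ.filter (fun k => k < i), a k) + a i := by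
        intro a
        rw [PP, show univ.filter (fun k => k ≤ i) = insert i (univ.filter (fun k => k < i)) by
          ext k; simp [le_iff_lt_or_eq, or_comm]]
        rw [Finset.sum_insert (by simp)]
        ring
      have hle : (∑ k ∈ univ.filter (fun k => k < i), m k) =
          (∑ k ∈ univ.filter (fun k => k < i), m' k) := by
        apply Finset.sum_congr rfl
        intro l hl
        exact hlow l (by simpa using hl)
      have h1 : PP i m' < PP i m ∨ PP i m < PP i m' := by
        rw [hsplit m, hsplit m', hle]
        rcases Nat.lt_or_ge (m' i) (m i) with h | h
        · left; omega
        · right; omega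
      have h2 : PP i m - PP i m' = 0 := by
        have : (∑ k, (PP k m - PP k m')) = 0 := Nat.le_zero.mp hN
        exact Finset.sum_eq_zero_iff.mp this i (mem_univ i)
      have h3 := hdom i
      omega
  | succ N ih =>
    intro m m' hN hdeg hdom
    by_cases hmm : m = m'
    · subst hmm
      exact Relation.ReflTransGen.refl
    · -- first differing index i, with m' i < m i
      have hs : (univ.filter (fun k => m k ≠ m' k)).Nonempty := by
        by_contra hh
        apply hmm
        funext k
        by_contra hk
        exact hh ⟨k, by simp [hk]⟩
      set i := (univ.filter (fun k => m k ≠ m' k)).min' hs with hi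
      have himem : m i ≠ m' i := by
        have := (univ.filter (fun k => m k ≠ m' k)).min'_mem hs
        simpa using this
      have hlow : ∀ l : Fin n, l < i → m l = m' l := by
        intro l hl
        by_contra hk
        exact absurd (Finset.min'_le _ l (by simp [hk])) (not_le.mpr hl)
      have hsplit : ∀ a : Fin n → ℕ, PP i a = (∑ k ∈ univ.filter (fun k => k < i), a k) + a i := by
        intro a
        rw [PP, show univ.filter (fun k => k ≤ i) = insert i (univ.filter (fun k => k < i)) by
          ext k; simp [le_iff_lt_or_eq, or_comm]]
        rw [Finset.sum_insert (by simp)]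
        ring
      have hle : (∑ k ∈ univ.filter (fun k => k < i), m k) =
          (∑ k ∈ univ.filter (fun k => k < i), m' k) := by
        apply Finset.sum_congr rfl
        intro l hl
        exact hlow l (by simpa using hl)
      have hii : m' i < m i := by
        have := hdom i
        rw [hsplit m, hsplit m', hle] at this
        omega
      -- an index j where m j < m' j; take the least such
      have hs2 : (univ.filter (fun k => m k < m' k)).Nonempty := by
        by_contra hh
        have hpt : ∀ k : Fin n, m' k ≤ m k := by
          intro k
          by_contra hk
          exact hh ⟨k, by simp; omega⟩
        have : degF m' < degF m := by
          apply Finset.sum_lt_sum (fun k _ => hpt k) ⟨i, mem_univ i, hii⟩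
        omega
      set j := (univ.filter (fun k => m k < m' k)).min' hs2 with hj
      have hjmem : m j < m' j := by
        have := (univ.filter (fun k => m k < m' k)).min'_mem hs2
        simpa using this
      have hjlow : ∀ l : Fin n, l < j → m' l ≤ m l := by
        intro l hl
        by_contra hk
        exact absurd (Finset.min'_le _ l (by simp; omega)) (not_le.mpr hl)
      have hij : i < j := by
        rcases lt_trichotomy i j with h | h | h
        · exact h
        · exfalso; rw [h] at hii; omega
        · exfalso; exact absurd (hlow j h) (by omega)
      -- the elementary move m → b
      set b : Fin n → ℕ := fun k => if k = i then m i - 1 else if k = j then m j + 1 else m k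
        with hb
      have heq : m + Pi.single j 1 = b + Pi.single i 1 := by
        funext k
        by_cases hki : k = i
        · subst hki
          simp [hb, Pi.single_apply, hij.ne]
          omega
        · by_cases hkj : k = j
          · subst hkj
            simp [hb, Pi.single_apply, hki, hij.ne']
          · simp [hb, Pi.single_apply, hki, hkj]
      have hdb : degF b = degF m := by
        have h1 : degF (m + Pi.single j 1) = degF (b + Pi.single i 1) := by rw [heq]
        rw [degF_add, degF_add, degF_single, degF_single] at h1
        omega
      have hPPb : ∀ k, PP k b + (if i ≤ k then 1 else 0) = PP k m + (if j ≤ k then 1 else 0) := by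
        intro k
        have h1 : PP k (m + Pi.single j 1) = PP k (b + Pi.single i 1) := by rw [heq]
        rw [PP_add, PP_add, PP_single, PP_single] at h1
        omega
      have hmid : ∀ k, i ≤ k → k < j → PP k m' < PP k m := by
        intro k hik hkj
        apply Finset.sum_lt_sum
        · intro l hl
          simp only [mem_filter] at hl
          exact hjlow l (lt_of_le_of_lt hl.2 hkj)
        · exact ⟨i, by simp [hik], hii⟩
      have hdom' : ∀ k, PP k m' ≤ PP k b := by
        intro k
        have h1 := hPPb k
        have h2 := hdom k
        by_cases hik : i ≤ k
        · by_cases hjk : j ≤ k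
          · rw [if_pos hik, if_pos hjk] at h1; omega
          · have h3 := hmid k hik (not_le.mp hjk)
            rw [if_pos hik, if_neg hjk] at h1; omega
        · have hjk : ¬ j ≤ k := fun h => hik (le_trans hij.le h)
          rw [if_neg hik, if_neg hjk] at h1; omega
      have hmeas : (∑ k, (PP k b - PP k m')) < ∑ k, (PP k m - PP k m') := by
        apply Finset.sum_lt_sum
        · intro k _
          have h1 := hPPb k
          have h2 := hdom k
          by_cases hik : i ≤ k
          · by_cases hjk : j ≤ k
            · rw [if_pos hik, if_pos hjk] at h1; omega
            · rw [if_pos hik, if_neg hjk] at h1; omega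
          · have hjk : ¬ j ≤ k := fun h => hik (le_trans hij.le h)
            rw [if_neg hik, if_neg hjk] at h1; omega
        · refine ⟨i, mem_univ i, ?_⟩
          have h1 := hPPb i
          have h3 := hmid i le_rfl hij
          rw [if_pos le_rfl, if_neg (not_le.mpr hij)] at h1
          omega
      have hstep : degF m = degF m ∧ degF b = degF m ∧ ElemMoveF m b :=
        ⟨rfl, hdb, i, j, hij, heq⟩
      have htail : AndF n (degF m) b m' := by
        have := ih b m' (by omega) (by omega) hdom'
        rwa [hdb] at this
      exact Relation.ReflTransGen.head hstep htail

end Stmt13Aux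

open Stmt13Aux

/-- For monomials `m ≠ m'` in `Mⁿ`, the pair `(m, m')` belongs
to every degree-compatible term order with `x₁ > x₂ > ⋯ > x_n` iff either
`deg m > deg m'`, or `deg m = deg m' = d` and `(m, m') ∈ A_{n,d}`; that is, the
intersection of all such term orders is the ordinal sum `⨁_{d} A_{n,d}`. -/
theorem stmt13 (n : ℕ) (hn : 0 < n) (m m' : Fin n → ℕ) (hne : m ≠ m') :
    (∀ le : (Fin n → ℕ) → (Fin n → ℕ) → Prop, IsTermOrder le →
      (∀ i j : Fin n, i < j →
        le (Pi.single j 1) (Pi.single i 1) ∧ ¬ le (Pi.single i 1) (Pi.single j 1)) →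
      (∀ a b : Fin n → ℕ, degF b < degF a → le b a) →
      le m' m)
    ↔ (degF m' < degF m ∨ (degF m = degF m' ∧ AndF n (degF m) m m')) := by
  constructor
  · intro H
    rcases Nat.lt_trichotomy (degF m') (degF m) with h | h | h
    · exact Or.inl h
    · right
      refine ⟨h.symm, ?_⟩
      by_contra hA
      have hdom : ¬ ∀ i, PP i m' ≤ PP i m := by
        intro hdom
        exact hA (transfer (∑ i, (PP i m - PP i m')) m m' le_rfl h.symm hdom)
      push_neg at hdom
      obtain ⟨i0, hi0⟩ := hdom
      set w : Fin n → ℕ := fun k => if k ≤ i0 then 2 else 1 with hw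
      have hwanti : ∀ k l : Fin n, k ≤ l → w l ≤ w k := by
        intro k l hkl
        simp only [hw]
        by_cases h1 : l ≤ i0
        · rw [if_pos h1, if_pos (le_trans hkl h1)]
        · by_cases h2 : k ≤ i0 <;> simp [h1, h2]
      have hSw : ∀ a : Fin n → ℕ, Sw w a = degF a + PP i0 a := by
        intro a
        have : Sw w a = (∑ k, a k) + ∑ k, (if k ≤ i0 then a k else 0) := by
          rw [Sw, ← Finset.sum_add_distrib]
          apply Finset.sum_congr rfl
          intro k _
          simp only [hw]
          split_ifs <;> ring
        rw [this, ← Finset.sum_filter]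
        rfl
      have hle := H (TLe w) (TLe_isTermOrder w) (fun i j hij => TLe_var w hwanti i j hij)
        (TLe_deg w)
      have hS1 := hSw m
      have hS2 := hSw m'
      rcases hle with hh | ⟨_, hh | ⟨hh, _⟩⟩ <;> omega
    · exfalso
      set w : Fin n → ℕ := fun _ => 1 with hw
      have hwanti : ∀ k l : Fin n, k ≤ l → w l ≤ w k := fun _ _ _ => le_refl _
      have hle := H (TLe w) (TLe_isTermOrder w) (fun i j hij => TLe_var w hwanti i j hij)
        (TLe_deg w)
      rcases hle with hh | ⟨hh, _⟩ <;> omega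
  · intro h le hto hvar hdeg
    obtain ⟨hlin, hzero, hcompat⟩ := hto
    haveI : IsLinearOrder (Fin n → ℕ) le := hlin
    rcases h with h | ⟨hd, hA⟩
    · exact hdeg m m' h
    · clear hne hd
      induction hA with
      | refl => exact refl_of le m
      | @tail b c hab hbc ih =>
        obtain ⟨_, _, i, j, hij, heq⟩ := hbc
        -- heq : b + Pi.single j 1 = c + Pi.single i 1
        have hcj : c j = b j + 1 := by
          have := congrFun heq j
          simp [Pi.single_apply, (ne_of_lt hij : i ≠ j).symm] at this
          omega
        set t : Fin n → ℕ := fun k => if k = j then c k - 1 else c k with ht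
        have ht1 : t + Pi.single j 1 = c := by
          funext k
          by_cases hk : k = j
          · subst hk; simp [ht, Pi.single_apply]; omega
          · simp [ht, Pi.single_apply, hk]
        have ht2 : t + Pi.single i 1 = b := by
          have h2 : b + Pi.single j 1 = (t + Pi.single i 1) + Pi.single j 1 := by
            rw [heq, ← ht1]
            funext k
            simp
            ring
          have := add_right_cancel h2
          exact this.symm
        have hstep : le c b := by
          have := hcompat (Pi.single j 1) (Pi.single i 1) t (hvar i j hij).1
          rwa [ht1, ht2] at this
        exact trans_of le hstep ih
end

section
/- For all positive integers n and d, the poset (M_d^n, B_{n,d}) is a lattice; moreover, for v ≤ n, (M_d^v, B_{v,d}) is a sublattice of (M_d^n, B_{n,d}). -/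
namespace Stable14

/-! ### Basic facts about `maxd` and `deg` -/

def maxd (m : Mon) : ℕ := m.support.sup id

lemma le_maxd {m : Mon} {v : ℕ} (h : m v ≠ 0) : v ≤ maxd m :=
  Finset.le_sup (f := id) (Finsupp.mem_support_iff.2 h)

lemma maxd_zero {m : Mon} {v : ℕ} (h : maxd m < v) : m v = 0 := by
  by_contra h0; exact absurd (le_maxd h0) (by omega)

lemma maxd_le {m : Mon} {N : ℕ} (h : ∀ v, N < v → m v = 0) : maxd m ≤ N := by
  refine Finset.sup_le fun x hx => ?_
  show x ≤ N
  by_contra hle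
  exact Finsupp.mem_support_iff.1 hx (h x (by omega))

lemma supp_nonempty {m : Mon} (h : deg m ≠ 0) : m.support.Nonempty := by
  rcases Finset.eq_empty_or_nonempty m.support with he | hn
  · exact absurd (by simp [Finsupp.support_eq_empty.1 he, deg]) h
  · exact hn

lemma maxd_apply_ne {m : Mon} (h : m.support.Nonempty) : m (maxd m) ≠ 0 := by
  obtain ⟨a, ha, he⟩ := Finset.exists_mem_eq_sup m.support h id
  rw [maxd, he]; exact Finsupp.mem_support_iff.1 ha

lemma deg_eq_sum {m : Mon} {N : ℕ} (h : maxd m < N) :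
    deg m = ∑ v ∈ Finset.range N, m v := by
  unfold deg
  refine Finsupp.sum_of_support_subset m ?_ _ (fun _ _ => rfl)
  intro i hi
  simp only [Finset.mem_range]
  exact lt_of_le_of_lt (le_maxd (Finsupp.mem_support_iff.1 hi)) h

lemma deg_add (x y : Mon) : deg (x + y) = deg x + deg y := by
  unfold deg; exact Finsupp.sum_add_index' (fun _ => rfl) (fun _ _ _ => rfl)

lemma deg_single (s c : ℕ) : deg (Finsupp.single s c) = c :=
  Finsupp.sum_single_index rfl

def W (m : Mon) : ℕ := m.sum fun v k => v * k

lemma W_add (x y : Mon) : W (x + y) = W x + W y := by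
  unfold W; exact Finsupp.sum_add_index' (fun a => mul_zero a) (fun a b c => mul_add a b c)

lemma W_single (s c : ℕ) : W (Finsupp.single s c) = s * c :=
  Finsupp.sum_single_index (mul_zero s)

/-! ### The order characterization -/

def preceq (a b : Mon) : Prop := maxd a ≤ maxd b ∧ ∀ v < maxd a, b v ≤ a v

lemma preceq_refl (a : Mon) : preceq a a := ⟨le_rfl, fun _ _ => le_rfl⟩

lemma preceq_trans {a b c : Mon} (h1 : preceq a b) (h2 : preceq b c) : preceq a c :=
  ⟨h1.1.trans h2.1, fun v hv => (h2.2 v (lt_of_lt_of_le hv h1.1)).trans (h1.2 v hv)⟩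

lemma eq_of_preceq {a b : Mon} (hd : deg a = deg b) (h1 : preceq a b) (h2 : preceq b a) :
    a = b := by
  obtain ⟨hm1, hv1⟩ := h1; obtain ⟨hm2, hv2⟩ := h2
  have hM : maxd a = maxd b := le_antisymm hm1 hm2
  set M := maxd a with hMdef
  have hlt : ∀ v < M, a v = b v := fun v hv =>
    le_antisymm (hv2 v (by omega)) (hv1 v hv)
  have hsa : deg a = (∑ v ∈ Finset.range M, a v) + a M := by
    rw [deg_eq_sum (N := M + 1) (by omega), Finset.sum_range_succ]
  have hsb : deg b = (∑ v ∈ Finset.range M, b v) + b M := by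
    rw [deg_eq_sum (N := M + 1) (by omega), Finset.sum_range_succ]
  have hsum : ∑ v ∈ Finset.range M, a v = ∑ v ∈ Finset.range M, b v :=
    Finset.sum_congr rfl fun v hv => hlt v (Finset.mem_range.1 hv)
  have hMM : a M = b M := by omega
  ext v
  rcases lt_trichotomy v M with h | h | h
  · exact hlt v h
  · rw [h, hMM]
  · rw [maxd_zero (by omega), maxd_zero (by omega)]

lemma preceq_of_stableMove {m m' : Mon} (h : StableMove m m') : preceq m m' := by
  obtain ⟨s, i, his, hs0, htop, heq⟩ := h
  have hps : ∀ v, m v + (Finsupp.single s 1 : Mon) v = m' v + (Finsupp.single i 1 : Mon) v :=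
    fun v => by rw [← Finsupp.add_apply, ← Finsupp.add_apply, heq]
  have hmax' : s ≤ maxd m' := le_maxd hs0
  have hmv : ∀ v, s < v → m v = 0 := by
    intro v hv
    have h1 := hps v
    rw [Finsupp.single_apply, Finsupp.single_apply, htop v hv,
      if_neg (by omega : ¬ s = v), if_neg (by omega : ¬ i = v)] at h1
    omega
  have hmm : maxd m ≤ s := maxd_le hmv
  refine ⟨hmm.trans hmax', fun v hv => ?_⟩
  have h1 := hps v
  rw [Finsupp.single_apply, Finsupp.single_apply, if_neg (by omega : ¬ s = v)] at h1
  by_cases hiv : i = v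
  · rw [if_pos hiv] at h1; omega
  · rw [if_neg hiv] at h1; omega

lemma deg_of_stableMove {m m' : Mon} (h : StableMove m m') : deg m = deg m' := by
  obtain ⟨s, i, _, _, _, heq⟩ := h
  have := congrArg deg heq
  rw [deg_add, deg_add, deg_single, deg_single] at this
  omega

lemma W_of_stableMove {m m' : Mon} (h : StableMove m m') : W m < W m' := by
  obtain ⟨s, i, his, _, _, heq⟩ := h
  have h2 := congrArg W heq
  rw [W_add, W_add, W_single, W_single] at h2
  have h3 : W m + s * 1 = W m' + i * 1 := h2
  omega

lemma preceq_of_rt {a b : Mon} (h : Relation.ReflTransGen StableMove b a) : preceq b a := by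
  induction h with
  | refl => exact preceq_refl b
  | tail _ h2 ih => exact preceq_trans ih (preceq_of_stableMove h2)

lemma exists_step {a b : Mon} (hd : deg b = deg a) (h0 : deg a ≠ 0) (hne : b ≠ a)
    (hp : preceq b a) :
    ∃ a₁ : Mon, StableMove a₁ a ∧ preceq b a₁ := by
  obtain ⟨hM, hV⟩ := hp
  set s := maxd a with hs
  set M := maxd b with hMb
  have hsupp_a : a.support.Nonempty := supp_nonempty h0
  have hsupp_b : b.support.Nonempty := supp_nonempty (by rw [hd]; exact h0)
  have has : a s ≠ 0 := maxd_apply_ne hsupp_a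
  have hbM : b M ≠ 0 := maxd_apply_ne hsupp_b
  have hdegsa : deg a = (∑ v ∈ Finset.range s, a v) + a s := by
    rw [deg_eq_sum (N := s + 1) (by omega), Finset.sum_range_succ]
  have hdegsb : deg b = (∑ v ∈ Finset.range M, b v) + b M := by
    rw [deg_eq_sum (N := M + 1) (by omega), Finset.sum_range_succ]
  have hex : ∃ v, v < s ∧ a v < b v := by
    by_contra hcon
    push_neg at hcon
    have hcon' : ∀ v, v < s → b v ≤ a v := fun v hv => by
      have := hcon v hv; omega
    rcases eq_or_lt_of_le hM with hMs | hMs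
    · apply hne
      have hlt : ∀ v < s, b v = a v := fun v hv =>
        le_antisymm (hcon' v hv) (hV v (by omega))
      have hsum : ∑ v ∈ Finset.range s, b v = ∑ v ∈ Finset.range s, a v :=
        Finset.sum_congr rfl fun v hv => hlt v (Finset.mem_range.1 hv)
      have hdegsb' : deg b = (∑ v ∈ Finset.range s, b v) + b s := by
        rw [deg_eq_sum (N := s + 1) (by omega : maxd b < s + 1), Finset.sum_range_succ]
      have hbs : b s = a s := by omega
      ext v
      rcases lt_trichotomy v s with h | h | h
      · exact hlt v h
      · rw [h, hbs]
      · rw [maxd_zero (m := b) (by omega), maxd_zero (m := a) (by omega)]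
    · have h1 : deg b ≤ (∑ v ∈ Finset.range M, a v) + a M := by
        have h2 : ∑ v ∈ Finset.range M, b v ≤ ∑ v ∈ Finset.range M, a v :=
          Finset.sum_le_sum fun v hv => hcon' v (by have := Finset.mem_range.1 hv; omega)
        have h3 := hcon' M hMs
        omega
      have hsub : Finset.range (M + 1) ⊆ Finset.range s := by
        intro x hx; simp only [Finset.mem_range] at *; omega
      have h3 : ∑ v ∈ Finset.range (M + 1), a v ≤ ∑ v ∈ Finset.range s, a v :=
        Finset.sum_le_sum_of_subset hsub
      have h4 : ∑ v ∈ Finset.range (M + 1), a v = ∑ v ∈ Finset.range M, a v + a M :=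
        Finset.sum_range_succ _ _
      omega
  set F := (Finset.range s).filter (fun v => a v < b v) with hF
  have hFne : F.Nonempty := by
    obtain ⟨v, hv1, hv2⟩ := hex
    exact ⟨v, by simp [hF, Finset.mem_filter, Finset.mem_range, hv1, hv2]⟩
  set i := F.max' hFne with hi
  have hiF : i ∈ F := Finset.max'_mem _ _
  have his : i < s := by
    have := (Finset.mem_filter.1 hiF).1; exact Finset.mem_range.1 this
  have hiab : a i < b i := by
    have := (Finset.mem_filter.1 hiF).2; simpa using this
  have himax : ∀ v, i < v → v < s → b v ≤ a v := by
    intro v hiv hvs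
    by_contra hcon
    have hvF : v ∈ F := by
      simp only [hF, Finset.mem_filter, Finset.mem_range]
      exact ⟨hvs, by omega⟩
    exact absurd (Finset.le_max' F v hvF) (by omega)
  have hle : (Finsupp.single s 1 : Mon) ≤ a + Finsupp.single i 1 := by
    rw [Finsupp.le_def]
    intro v
    rw [Finsupp.add_apply, Finsupp.single_apply, Finsupp.single_apply]
    by_cases hv : s = v
    · rw [if_pos hv, ← hv]; omega
    · rw [if_neg hv]; omega
  set a₁ : Mon := a + Finsupp.single i 1 - Finsupp.single s 1 with ha₁
  have heq : a₁ + Finsupp.single s 1 = a + Finsupp.single i 1 := tsub_add_cancel_of_le hle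
  have hps : ∀ v, a₁ v + (Finsupp.single s 1 : Mon) v = a v + (Finsupp.single i 1 : Mon) v :=
    fun v => by rw [← Finsupp.add_apply, ← Finsupp.add_apply, heq]
  have ha₁i : a₁ i = a i + 1 := by
    have := hps i
    rw [Finsupp.single_apply, Finsupp.single_apply, if_neg (by omega : ¬ s = i),
      if_pos rfl] at this
    omega
  have ha₁s : a₁ s + 1 = a s := by
    have := hps s
    rw [Finsupp.single_apply, Finsupp.single_apply, if_pos rfl,
      if_neg (by omega : ¬ i = s)] at this
    omega
  have ha₁v : ∀ v, v ≠ i → v ≠ s → a₁ v = a v := by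
    intro v hvi hvs
    have := hps v
    rw [Finsupp.single_apply, Finsupp.single_apply, if_neg (by omega : ¬ s = v),
      if_neg (by omega : ¬ i = v)] at this
    omega
  have hmove : StableMove a₁ a := ⟨s, i, his, has, fun t ht => maxd_zero ht, heq⟩
  refine ⟨a₁, hmove, ?_, ?_⟩
  · rcases le_or_gt M i with hMi | hiM
    · have h6 : a₁ i ≠ 0 := by omega
      exact hMi.trans (le_maxd h6)
    · rcases eq_or_lt_of_le hM with hMs | hMs
      · have hdegsb' : deg b = (∑ v ∈ Finset.range s, b v) + b s := by
          rw [deg_eq_sum (N := s + 1) (by omega : maxd b < s + 1), Finset.sum_range_succ]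
        have hbs_le : b s ≤ a s := by
          have hsum : ∑ v ∈ Finset.range s, a v ≤ ∑ v ∈ Finset.range s, b v := by
            refine Finset.sum_le_sum fun v hv => ?_
            exact hV v (by have := Finset.mem_range.1 hv; omega)
          omega
        have hbs_ne : b s ≠ 0 := by have hx : b M ≠ 0 := hbM; rw [hMs] at hx; exact hx
        have has2 : 2 ≤ a s := by
          by_contra hc
          have h1 : a s = 1 := by omega
          have h2 : b s = 1 := by omega
          have hsumlt : ∑ v ∈ Finset.range s, a v < ∑ v ∈ Finset.range s, b v := by
            refine Finset.sum_lt_sum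
              (fun v hv => hV v (by have := Finset.mem_range.1 hv; omega))
              ⟨i, Finset.mem_range.2 his, hiab⟩
          omega
        have h7 : a₁ s ≠ 0 := by omega
        have h8 : s ≤ maxd a₁ := le_maxd h7
        omega
      · have hbMa : b M ≤ a M := himax M hiM hMs
        have haM : a M ≠ 0 := by omega
        have h9 : a₁ M = a M := ha₁v M (by omega) (by omega)
        have h10 : a₁ M ≠ 0 := by omega
        exact le_maxd h10
  · intro v hv
    have hvs : v < s := by omega
    by_cases hvi : v = i
    · rw [hvi, ha₁i]; omega
    · rw [ha₁v v hvi (by omega)]; exact hV v hv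

lemma rt_of_preceq {a b : Mon} (hd : deg b = deg a) (h0 : deg a ≠ 0) (hp : preceq b a) :
    Relation.ReflTransGen StableMove b a := by
  obtain ⟨N, hN⟩ : ∃ N, W a ≤ N := ⟨W a, le_rfl⟩
  induction N generalizing a with
  | zero =>
    by_cases hne : b = a
    · rw [hne]
    · obtain ⟨a₁, hm, _⟩ := exists_step hd h0 hne hp
      have := W_of_stableMove hm
      omega
  | succ n ih =>
    by_cases hne : b = a
    · rw [hne]
    · obtain ⟨a₁, hm, hp₁⟩ := exists_step hd h0 hne hp
      have hW := W_of_stableMove hm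
      have hdeg₁ := deg_of_stableMove hm
      have h₁ : Relation.ReflTransGen StableMove b a₁ :=
        ih (by omega) (by omega) hp₁ (by omega)
      exact h₁.tail hm

/-! ### The join (least upper bound w.r.t. `preceq`) -/

def jfun (a b : Mon) (v : ℕ) : ℕ :=
  if v < maxd a then (if v < maxd b then min (a v) (b v) else a v)
  else if v < maxd b then b v else 0

lemma jfun_comm (a b : Mon) : jfun a b = jfun b a := by
  funext v
  unfold jfun
  rcases lt_or_ge v (maxd a) with h1 | h1 <;> rcases lt_or_ge v (maxd b) with h2 | h2 <;>
    simp [h1, h2, not_lt.2, min_comm]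

def bigM (a b : Mon) : ℕ := max (maxd a) (maxd b)

lemma jfun_zero {a b : Mon} {v : ℕ} (h : bigM a b ≤ v) : jfun a b v = 0 := by
  unfold jfun
  rw [if_neg, if_neg] <;> simp only [bigM] at h <;> omega

noncomputable def jmon (d : ℕ) (a b : Mon) : Mon :=
  Finsupp.onFinset (Finset.range (bigM a b + 1))
    (fun v => if v = bigM a b then d - ∑ w ∈ Finset.range (bigM a b), jfun a b w
              else jfun a b v)
    (by
      intro v hv
      simp only [Finset.mem_range]
      replace hv : (if v = bigM a b then d - ∑ w ∈ Finset.range (bigM a b), jfun a b w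
          else jfun a b v) ≠ 0 := hv
      by_cases h : v = bigM a b
      · omega
      · rw [if_neg h] at hv
        by_contra hc
        exact hv (jfun_zero (by omega)))

lemma jmon_apply_top (d : ℕ) (a b : Mon) :
    jmon d a b (bigM a b) = d - ∑ w ∈ Finset.range (bigM a b), jfun a b w := by
  simp [jmon]

lemma jmon_apply_ne {d : ℕ} {a b : Mon} {v : ℕ} (h : v ≠ bigM a b) :
    jmon d a b v = jfun a b v := by
  simp [jmon, h]

lemma jsum_lt_aux {d : ℕ} {a b : Mon} (hda : deg a = d) (h0 : d ≠ 0)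
    (hba : maxd b ≤ maxd a) :
    (∑ w ∈ Finset.range (bigM a b), jfun a b w) + 1 ≤ d := by
  have hM : bigM a b = maxd a := max_eq_left hba
  have h1 : ∀ w ∈ Finset.range (bigM a b), jfun a b w ≤ a w := by
    intro w hw
    have hw' : w < maxd a := by rw [← hM]; exact Finset.mem_range.1 hw
    unfold jfun
    rw [if_pos hw']
    by_cases h2 : w < maxd b
    · rw [if_pos h2]; exact min_le_left _ _
    · rw [if_neg h2]
  have h2 : ∑ w ∈ Finset.range (bigM a b), jfun a b w ≤ ∑ w ∈ Finset.range (maxd a), a w := by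
    rw [hM] at h1 ⊢; exact Finset.sum_le_sum h1
  have h3 : deg a = (∑ w ∈ Finset.range (maxd a), a w) + a (maxd a) := by
    rw [deg_eq_sum (N := maxd a + 1) (by omega), Finset.sum_range_succ]
  have h4 : a (maxd a) ≠ 0 := maxd_apply_ne (supp_nonempty (by omega))
  omega

lemma jsum_lt {d : ℕ} {a b : Mon} (hda : deg a = d) (hdb : deg b = d) (h0 : d ≠ 0) :
    (∑ w ∈ Finset.range (bigM a b), jfun a b w) + 1 ≤ d := by
  rcases le_total (maxd b) (maxd a) with h | h
  · exact jsum_lt_aux hda h0 h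
  · have := jsum_lt_aux hdb h0 h
    rwa [jfun_comm, (by unfold bigM; omega : bigM b a = bigM a b)] at this

lemma jmon_top_ne {d : ℕ} {a b : Mon} (hda : deg a = d) (hdb : deg b = d) (h0 : d ≠ 0) :
    jmon d a b (bigM a b) ≠ 0 := by
  rw [jmon_apply_top]
  have := jsum_lt hda hdb h0
  omega

lemma maxd_jmon {d : ℕ} {a b : Mon} (hda : deg a = d) (hdb : deg b = d) (h0 : d ≠ 0) :
    maxd (jmon d a b) = bigM a b := by
  refine le_antisymm (maxd_le fun v hv => ?_) (le_maxd (jmon_top_ne hda hdb h0))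
  rw [jmon_apply_ne (by omega)]
  exact jfun_zero (by omega)

lemma deg_jmon {d : ℕ} {a b : Mon} (hda : deg a = d) (hdb : deg b = d) (h0 : d ≠ 0) :
    deg (jmon d a b) = d := by
  rw [deg_eq_sum (N := bigM a b + 1) (by rw [maxd_jmon hda hdb h0]; omega),
    Finset.sum_range_succ]
  have h1 : ∑ v ∈ Finset.range (bigM a b), jmon d a b v
      = ∑ v ∈ Finset.range (bigM a b), jfun a b v := by
    refine Finset.sum_congr rfl fun v hv => ?_
    exact jmon_apply_ne (by have := Finset.mem_range.1 hv; omega)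
  rw [h1, jmon_apply_top]
  have := jsum_lt hda hdb h0
  omega

lemma preceq_jmon_left {d : ℕ} {a b : Mon} (hda : deg a = d) (hdb : deg b = d) (h0 : d ≠ 0) :
    preceq a (jmon d a b) := by
  constructor
  · rw [maxd_jmon hda hdb h0]; exact le_max_left _ _
  · intro v hv
    have hvM : v < bigM a b := lt_of_lt_of_le hv (le_max_left _ _)
    rw [jmon_apply_ne (by omega)]
    unfold jfun
    rw [if_pos hv]
    by_cases h2 : v < maxd b
    · rw [if_pos h2]; exact min_le_left _ _
    · rw [if_neg h2]

lemma preceq_jmon_right {d : ℕ} {a b : Mon} (hda : deg a = d) (hdb : deg b = d) (h0 : d ≠ 0) :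
    preceq b (jmon d a b) := by
  constructor
  · rw [maxd_jmon hda hdb h0]; exact le_max_right _ _
  · intro v hv
    have hvM : v < bigM a b := lt_of_lt_of_le hv (le_max_right _ _)
    rw [jmon_apply_ne (by omega)]
    unfold jfun
    by_cases h1 : v < maxd a
    · rw [if_pos h1, if_pos hv]; exact min_le_right _ _
    · rw [if_neg h1, if_pos hv]

lemma jmon_least {d : ℕ} {a b c : Mon} (hda : deg a = d) (hdb : deg b = d) (h0 : d ≠ 0)
    (h1 : preceq a c) (h2 : preceq b c) : preceq (jmon d a b) c := by
  constructor
  · rw [maxd_jmon hda hdb h0]; exact max_le h1.1 h2.1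
  · intro v hv
    rw [maxd_jmon hda hdb h0] at hv
    rw [jmon_apply_ne (by omega)]
    unfold jfun
    by_cases ha : v < maxd a <;> by_cases hb : v < maxd b
    · rw [if_pos ha, if_pos hb]
      exact le_min (h1.2 v ha) (h2.2 v hb)
    · rw [if_pos ha, if_neg hb]; exact h1.2 v ha
    · rw [if_neg ha, if_pos hb]; exact h2.2 v hb
    · exfalso; simp only [bigM] at hv; omega

/-! ### The meet (greatest lower bound w.r.t. `preceq`) -/

def tsum (a b : Mon) (k : ℕ) : ℕ := ∑ w ∈ Finset.range k, max (a w) (b w)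

def mu (d : ℕ) (a b : Mon) : ℕ :=
  Nat.findGreatest (fun k => tsum a b k + 1 ≤ d) (min (maxd a) (maxd b))

lemma mu_spec {d : ℕ} (a b : Mon) (h0 : d ≠ 0) : tsum a b (mu d a b) + 1 ≤ d :=
  Nat.findGreatest_spec (P := fun k => tsum a b k + 1 ≤ d) (Nat.zero_le _)
    (by have h : tsum a b 0 = 0 := by simp [tsum]
        omega)

lemma mu_le (d : ℕ) (a b : Mon) : mu d a b ≤ min (maxd a) (maxd b) :=
  Nat.findGreatest_le _

lemma le_mu {d k : ℕ} {a b : Mon} (hk : k ≤ min (maxd a) (maxd b))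
    (hP : tsum a b k + 1 ≤ d) : k ≤ mu d a b :=
  Nat.le_findGreatest hk hP

noncomputable def mmon (d : ℕ) (a b : Mon) : Mon :=
  Finsupp.onFinset (Finset.range (mu d a b + 1))
    (fun v => if v = mu d a b then d - tsum a b (mu d a b)
              else if v < mu d a b then max (a v) (b v) else 0)
    (by
      intro v hv
      simp only [Finset.mem_range]
      replace hv : (if v = mu d a b then d - tsum a b (mu d a b)
          else if v < mu d a b then max (a v) (b v) else 0) ≠ 0 := hv
      by_cases h : v = mu d a b
      · omega
      · rw [if_neg h] at hv
        by_contra hc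
        rw [if_neg (by omega)] at hv
        exact hv rfl)

lemma mmon_apply_top (d : ℕ) (a b : Mon) :
    mmon d a b (mu d a b) = d - tsum a b (mu d a b) := by simp [mmon]

lemma mmon_apply_lt {d : ℕ} {a b : Mon} {v : ℕ} (h : v < mu d a b) :
    mmon d a b v = max (a v) (b v) := by
  simp only [mmon, Finsupp.onFinset_apply]
  rw [if_neg (by omega), if_pos h]

lemma mmon_apply_gt {d : ℕ} {a b : Mon} {v : ℕ} (h : mu d a b < v) :
    mmon d a b v = 0 := by
  simp only [mmon, Finsupp.onFinset_apply]
  rw [if_neg (by omega), if_neg (by omega)]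

lemma mmon_top_ne {d : ℕ} {a b : Mon} (h0 : d ≠ 0) : mmon d a b (mu d a b) ≠ 0 := by
  rw [mmon_apply_top]
  have := mu_spec a b h0 (d := d)
  omega

lemma maxd_mmon {d : ℕ} {a b : Mon} (h0 : d ≠ 0) : maxd (mmon d a b) = mu d a b :=
  le_antisymm (maxd_le fun _ hv => mmon_apply_gt hv) (le_maxd (mmon_top_ne h0))

lemma deg_mmon {d : ℕ} {a b : Mon} (h0 : d ≠ 0) : deg (mmon d a b) = d := by
  rw [deg_eq_sum (N := mu d a b + 1) (by rw [maxd_mmon h0]; omega), Finset.sum_range_succ]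
  have h1 : ∑ v ∈ Finset.range (mu d a b), mmon d a b v = tsum a b (mu d a b) :=
    Finset.sum_congr rfl fun v hv => mmon_apply_lt (Finset.mem_range.1 hv)
  rw [h1, mmon_apply_top]
  have := mu_spec a b h0 (d := d)
  omega

lemma preceq_mmon_left {d : ℕ} {a b : Mon} (h0 : d ≠ 0) : preceq (mmon d a b) a := by
  constructor
  · rw [maxd_mmon h0]
    exact (mu_le d a b).trans (min_le_left _ _)
  · intro v hv
    rw [maxd_mmon h0] at hv
    rw [mmon_apply_lt hv]
    exact le_max_left _ _

lemma preceq_mmon_right {d : ℕ} {a b : Mon} (h0 : d ≠ 0) : preceq (mmon d a b) b := by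
  constructor
  · rw [maxd_mmon h0]
    exact (mu_le d a b).trans (min_le_right _ _)
  · intro v hv
    rw [maxd_mmon h0] at hv
    rw [mmon_apply_lt hv]
    exact le_max_right _ _

lemma mmon_greatest {d : ℕ} {a b e : Mon} (hde : deg e = d) (h0 : d ≠ 0)
    (h1 : preceq e a) (h2 : preceq e b) : preceq e (mmon d a b) := by
  have hMe : maxd e ≤ min (maxd a) (maxd b) := le_min h1.1 h2.1
  have hPe : tsum a b (maxd e) + 1 ≤ d := by
    have hs1 : tsum a b (maxd e) ≤ ∑ w ∈ Finset.range (maxd e), e w := by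
      refine Finset.sum_le_sum fun v hv => ?_
      have hv' := Finset.mem_range.1 hv
      exact max_le (h1.2 v hv') (h2.2 v hv')
    have hs2 : deg e = (∑ w ∈ Finset.range (maxd e), e w) + e (maxd e) := by
      rw [deg_eq_sum (N := maxd e + 1) (by omega), Finset.sum_range_succ]
    have hs3 : e (maxd e) ≠ 0 := maxd_apply_ne (supp_nonempty (by omega))
    omega
  have hle : maxd e ≤ mu d a b := le_mu hMe hPe
  constructor
  · rw [maxd_mmon h0]; exact hle
  · intro v hv
    rw [mmon_apply_lt (by omega)]
    exact max_le (h1.2 v hv) (h2.2 v hv)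

/-! ### `InVars` helpers -/

lemma maxd_lt_of_inVars {m : Mon} {v : ℕ} (h : InVars v m) (hne : m.support.Nonempty) :
    maxd m < v := by
  obtain ⟨a, ha, he⟩ := Finset.exists_mem_eq_sup m.support hne id
  rw [maxd, he]; exact h a ha

lemma inVars_of_maxd_lt {m : Mon} {v : ℕ} (h : maxd m < v) : InVars v m := by
  intro i hi
  exact lt_of_le_of_lt (le_maxd (Finsupp.mem_support_iff.1 hi)) h

end Stable14

open Stable14 in
/-- For positive integers `n, d`, the poset `(M_d^n, B_{n,d})`
(where `B_{n,d}` is the reflexive–transitive closure of stable moves, which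
preserve both degree and the variable range) is a lattice; moreover, for
`0 < v ≤ n`, the subset `M_d^v` is a sublattice: it is closed under the join and
meet operations of the lattice. -/
theorem stmt14 (n d : ℕ) (hn : 0 < n) (hd : 0 < d) :
    ∃ inst : Lattice {m : Mon // InVars n m ∧ deg m = d},
      (∀ a b : {m : Mon // InVars n m ∧ deg m = d},
        inst.le a b ↔ Relation.ReflTransGen StableMove b.1 a.1) ∧
      ∀ v : ℕ, 0 < v → v ≤ n →
        ∀ a b : {m : Mon // InVars n m ∧ deg m = d},
          InVars v a.1 → InVars v b.1 →
          InVars v (inst.sup a b).1 ∧ InVars v (inst.inf a b).1 := by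
  have h0 : d ≠ 0 := by omega
  -- basic facts on the subtype
  have hmem : ∀ a : {m : Mon // InVars n m ∧ deg m = d}, maxd a.1 < n := fun a =>
    maxd_lt_of_inVars a.2.1 (supp_nonempty (by rw [a.2.2]; exact h0))
  refine ⟨{
    le := fun a b => preceq b.1 a.1
    lt := fun a b => preceq b.1 a.1 ∧ ¬ preceq a.1 b.1
    le_refl := fun a => preceq_refl a.1
    le_trans := fun a b c h1 h2 => preceq_trans h2 h1
    lt_iff_le_not_ge := fun a b => Iff.rfl
    le_antisymm := fun a b h1 h2 =>
      Subtype.ext (eq_of_preceq (by rw [a.2.2, b.2.2]) h2 h1)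
    sup := fun a b => ⟨mmon d a.1 b.1,
      inVars_of_maxd_lt (by
        have := mu_le d a.1 b.1
        have := hmem a
        rw [maxd_mmon h0]
        omega),
      deg_mmon h0⟩
    le_sup_left := fun a b => preceq_mmon_left h0
    le_sup_right := fun a b => preceq_mmon_right h0
    sup_le := fun a b c h1 h2 => mmon_greatest c.2.2 h0 h1 h2
    inf := fun a b => ⟨jmon d a.1 b.1,
      inVars_of_maxd_lt (by
        have := hmem a
        have := hmem b
        rw [maxd_jmon a.2.2 b.2.2 h0]
        unfold bigM
        omega),
      deg_jmon a.2.2 b.2.2 h0⟩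
    inf_le_left := fun a b => preceq_jmon_left a.2.2 b.2.2 h0
    inf_le_right := fun a b => preceq_jmon_right a.2.2 b.2.2 h0
    le_inf := fun a b c h1 h2 => jmon_least b.2.2 c.2.2 h0 h1 h2 }, ?_, ?_⟩
  · intro a b
    constructor
    · intro h
      exact rt_of_preceq (by rw [a.2.2, b.2.2]) (by rw [a.2.2]; exact h0) h
    · intro h
      exact preceq_of_rt h
  · intro v hv hvn a b ha hb
    have hma : maxd a.1 < v := maxd_lt_of_inVars ha (supp_nonempty (by rw [a.2.2]; exact h0))
    have hmb : maxd b.1 < v := maxd_lt_of_inVars hb (supp_nonempty (by rw [b.2.2]; exact h0))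
    constructor
    · refine inVars_of_maxd_lt ?_
      show maxd (mmon d a.1 b.1) < v
      have := mu_le d a.1 b.1
      rw [maxd_mmon h0]
      omega
    · refine inVars_of_maxd_lt ?_
      show maxd (jmon d a.1 b.1) < v
      rw [maxd_jmon a.2.2 b.2.2 h0]
      unfold bigM
      omega
end

section
/- For integers n ≥ 3 and d ≥ 2, the lattice (M_d^n, B_{n,d}) is not modular (it contains a copy of the pentagon lattice N_5). -/
-- six monomials
noncomputable def mT (k : ℕ) : Mon := Finsupp.single 0 k + Finsupp.single 2 2
noncomputable def mC (k : ℕ) : Mon := Finsupp.single 0 k + Finsupp.single 1 1 + Finsupp.single 2 1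
noncomputable def mB (k : ℕ) : Mon := Finsupp.single 0 (k+1) + Finsupp.single 2 1
noncomputable def mA (k : ℕ) : Mon := Finsupp.single 0 k + Finsupp.single 1 2
noncomputable def mM (k : ℕ) : Mon := Finsupp.single 0 (k+1) + Finsupp.single 1 1
noncomputable def mZ (k : ℕ) : Mon := Finsupp.single 0 (k+2)

lemma mT_apply (k a : ℕ) : mT k a = (if a = 0 then k else 0) + (if a = 2 then 2 else 0) := by
  simp [mT, Finsupp.single_apply, eq_comm] <;> split_ifs <;> omega
lemma mC_apply (k a : ℕ) : mC k a = (if a = 0 then k else 0) + (if a = 1 then 1 else 0) + (if a = 2 then 1 else 0) := by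
  simp [mC, Finsupp.single_apply, eq_comm] <;> split_ifs <;> omega
lemma mB_apply (k a : ℕ) : mB k a = (if a = 0 then k+1 else 0) + (if a = 2 then 1 else 0) := by
  simp [mB, Finsupp.single_apply, eq_comm] <;> split_ifs <;> omega
lemma mA_apply (k a : ℕ) : mA k a = (if a = 0 then k else 0) + (if a = 1 then 2 else 0) := by
  simp [mA, Finsupp.single_apply, eq_comm] <;> split_ifs <;> omega
lemma mM_apply (k a : ℕ) : mM k a = (if a = 0 then k+1 else 0) + (if a = 1 then 1 else 0) := by
  simp [mM, Finsupp.single_apply, eq_comm] <;> split_ifs <;> omega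
lemma mZ_apply (k a : ℕ) : mZ k a = (if a = 0 then k+2 else 0) := by
  simp [mZ, Finsupp.single_apply, eq_comm] <;> split_ifs <;> omega

set_option linter.unreachableTactic false
set_option linter.unusedTactic false
set_option linter.unnecessarySeqFocus false

lemma move_eq {m' c m : Mon} {s i : ℕ}
    (heq : m' + Finsupp.single s 1 = m + Finsupp.single i 1)
    (hc : c + Finsupp.single s 1 = m + Finsupp.single i 1) : m' = c := by
  have h := heq.trans hc.symm
  ext a
  have h2 : m' a + Finsupp.single s 1 a = c a + Finsupp.single s 1 a := by
    have := congrArg (fun f : Mon => f a) h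
    simpa using this
  omega

lemma stepT (k : ℕ) {m' : Mon} (h : StableMove m' (mT k)) : m' = mB k ∨ m' = mC k := by
  obtain ⟨s, i, hlt, hs, htop, heq⟩ := h
  have hs2 : s = 2 := by
    by_contra hne
    rcases Nat.lt_or_ge s 2 with h1 | h1
    · have := htop 2 (by omega); simp [mT_apply] at this
    · rw [mT_apply] at hs; split_ifs at hs <;> omega
  subst hs2
  interval_cases i
  · left
    refine move_eq heq ?_
    ext a; simp only [Finsupp.add_apply, Finsupp.single_apply, mB_apply, mT_apply]
    split_ifs <;> omega
  · right
    refine move_eq heq ?_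
    ext a; simp only [Finsupp.add_apply, Finsupp.single_apply, mC_apply, mT_apply]
    split_ifs <;> omega

lemma stepC (k : ℕ) {m' : Mon} (h : StableMove m' (mC k)) : m' = mM k ∨ m' = mA k := by
  obtain ⟨s, i, hlt, hs, htop, heq⟩ := h
  have hs2 : s = 2 := by
    by_contra hne
    rcases Nat.lt_or_ge s 2 with h1 | h1
    · have := htop 2 (by omega); simp [mC_apply] at this
    · rw [mC_apply] at hs; split_ifs at hs <;> omega
  subst hs2
  interval_cases i
  · left
    refine move_eq heq ?_
    ext a; simp only [Finsupp.add_apply, Finsupp.single_apply, mM_apply, mC_apply]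
    split_ifs <;> omega
  · right
    refine move_eq heq ?_
    ext a; simp only [Finsupp.add_apply, Finsupp.single_apply, mA_apply, mC_apply]
    split_ifs <;> omega

lemma stepB (k : ℕ) {m' : Mon} (h : StableMove m' (mB k)) : m' = mZ k ∨ m' = mM k := by
  obtain ⟨s, i, hlt, hs, htop, heq⟩ := h
  have hs2 : s = 2 := by
    by_contra hne
    rcases Nat.lt_or_ge s 2 with h1 | h1
    · have := htop 2 (by omega); simp [mB_apply] at this
    · rw [mB_apply] at hs; split_ifs at hs <;> omega
  subst hs2
  interval_cases i
  · left
    refine move_eq heq ?_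
    ext a; simp only [Finsupp.add_apply, Finsupp.single_apply, mZ_apply, mB_apply]
    split_ifs <;> omega
  · right
    refine move_eq heq ?_
    ext a; simp only [Finsupp.add_apply, Finsupp.single_apply, mM_apply, mB_apply]
    split_ifs <;> omega

lemma stepA (k : ℕ) {m' : Mon} (h : StableMove m' (mA k)) : m' = mM k := by
  obtain ⟨s, i, hlt, hs, htop, heq⟩ := h
  have hs2 : s = 1 := by
    by_contra hne
    rcases Nat.lt_or_ge s 1 with h1 | h1
    · have := htop 1 (by omega); simp [mA_apply] at this
    · rw [mA_apply] at hs; split_ifs at hs <;> omega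
  subst hs2
  interval_cases i
  refine move_eq heq ?_
  ext a; simp only [Finsupp.add_apply, Finsupp.single_apply, mM_apply, mA_apply]
  split_ifs <;> omega

lemma stepM (k : ℕ) {m' : Mon} (h : StableMove m' (mM k)) : m' = mZ k := by
  obtain ⟨s, i, hlt, hs, htop, heq⟩ := h
  have hs2 : s = 1 := by
    by_contra hne
    rcases Nat.lt_or_ge s 1 with h1 | h1
    · have := htop 1 (by omega); simp [mM_apply] at this
    · rw [mM_apply] at hs; split_ifs at hs <;> omega
  subst hs2
  interval_cases i
  refine move_eq heq ?_
  ext a; simp only [Finsupp.add_apply, Finsupp.single_apply, mZ_apply, mM_apply]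
  split_ifs <;> omega

lemma stepZ (k : ℕ) {m' : Mon} (h : StableMove m' (mZ k)) : False := by
  obtain ⟨s, i, hlt, hs, htop, heq⟩ := h
  rw [mZ_apply] at hs
  split_ifs at hs <;> omega

lemma down_sub (P : Mon → Prop) (hcl : ∀ x y : Mon, P y → StableMove x y → P x)
    {a b : Mon} (hb : P b) (h : Relation.ReflTransGen StableMove a b) : P a := by
  induction h using Relation.ReflTransGen.head_induction_on with
  | refl => exact hb
  | head h1 _ ih => exact hcl _ _ ih h1

def inS (k : ℕ) (m : Mon) : Prop :=
  m = mT k ∨ m = mC k ∨ m = mB k ∨ m = mA k ∨ m = mM k ∨ m = mZ k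

lemma downT (k : ℕ) {m : Mon} (h : Relation.ReflTransGen StableMove m (mT k)) :
    inS k m := by
  refine down_sub (inS k) ?_ (Or.inl rfl) h
  rintro x y (rfl | rfl | rfl | rfl | rfl | rfl) hm
  · rcases stepT k hm with rfl | rfl
    · exact Or.inr (Or.inr (Or.inl rfl))
    · exact Or.inr (Or.inl rfl)
  · rcases stepC k hm with rfl | rfl
    · exact Or.inr (Or.inr (Or.inr (Or.inr (Or.inl rfl))))
    · exact Or.inr (Or.inr (Or.inr (Or.inl rfl)))
  · rcases stepB k hm with rfl | rfl
    · exact Or.inr (Or.inr (Or.inr (Or.inr (Or.inr rfl))))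
    · exact Or.inr (Or.inr (Or.inr (Or.inr (Or.inl rfl))))
  · exact Or.inr (Or.inr (Or.inr (Or.inr (Or.inl (stepA k hm)))))
  · exact Or.inr (Or.inr (Or.inr (Or.inr (Or.inr (stepM k hm)))))
  · exact absurd hm (fun hh => stepZ k hh)

lemma downC (k : ℕ) {m : Mon} (h : Relation.ReflTransGen StableMove m (mC k)) :
    m = mC k ∨ m = mA k ∨ m = mM k ∨ m = mZ k := by
  refine down_sub (fun x => x = mC k ∨ x = mA k ∨ x = mM k ∨ x = mZ k) ?_ (Or.inl rfl) h
  rintro x y (rfl | rfl | rfl | rfl) hm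
  · rcases stepC k hm with rfl | rfl
    · exact Or.inr (Or.inr (Or.inl rfl))
    · exact Or.inr (Or.inl rfl)
  · exact Or.inr (Or.inr (Or.inl (stepA k hm)))
  · exact Or.inr (Or.inr (Or.inr (stepM k hm)))
  · exact absurd hm (fun hh => stepZ k hh)

lemma downB (k : ℕ) {m : Mon} (h : Relation.ReflTransGen StableMove m (mB k)) :
    m = mB k ∨ m = mM k ∨ m = mZ k := by
  refine down_sub (fun x => x = mB k ∨ x = mM k ∨ x = mZ k) ?_ (Or.inl rfl) h
  rintro x y (rfl | rfl | rfl) hm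
  · rcases stepB k hm with rfl | rfl
    · exact Or.inr (Or.inr rfl)
    · exact Or.inr (Or.inl rfl)
  · exact Or.inr (Or.inr (stepM k hm))
  · exact absurd hm (fun hh => stepZ k hh)

lemma downA (k : ℕ) {m : Mon} (h : Relation.ReflTransGen StableMove m (mA k)) :
    m = mA k ∨ m = mM k ∨ m = mZ k := by
  refine down_sub (fun x => x = mA k ∨ x = mM k ∨ x = mZ k) ?_ (Or.inl rfl) h
  rintro x y (rfl | rfl | rfl) hm
  · exact Or.inr (Or.inl (stepA k hm))
  · exact Or.inr (Or.inr (stepM k hm))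
  · exact absurd hm (fun hh => stepZ k hh)

lemma downM (k : ℕ) {m : Mon} (h : Relation.ReflTransGen StableMove m (mM k)) :
    m = mM k ∨ m = mZ k := by
  refine down_sub (fun x => x = mM k ∨ x = mZ k) ?_ (Or.inl rfl) h
  rintro x y (rfl | rfl) hm
  · exact Or.inr (stepM k hm)
  · exact absurd hm (fun hh => stepZ k hh)

lemma downZ (k : ℕ) {m : Mon} (h : Relation.ReflTransGen StableMove m (mZ k)) :
    m = mZ k := by
  refine down_sub (fun x => x = mZ k) ?_ rfl h
  rintro x y rfl hm
  exact absurd hm (fun hh => stepZ k hh)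

-- single stable moves
lemma mv_CT (k : ℕ) : StableMove (mC k) (mT k) := by
  refine ⟨2, 1, by omega, by simp [mT_apply], fun t ht => by rw [mT_apply]; split_ifs <;> omega, ?_⟩
  ext a; simp only [Finsupp.add_apply, Finsupp.single_apply, mC_apply, mT_apply]
  split_ifs <;> omega

lemma mv_BT (k : ℕ) : StableMove (mB k) (mT k) := by
  refine ⟨2, 0, by omega, by simp [mT_apply], fun t ht => by rw [mT_apply]; split_ifs <;> omega, ?_⟩
  ext a; simp only [Finsupp.add_apply, Finsupp.single_apply, mB_apply, mT_apply]
  split_ifs <;> omega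

lemma mv_AC (k : ℕ) : StableMove (mA k) (mC k) := by
  refine ⟨2, 1, by omega, by simp [mC_apply], fun t ht => by rw [mC_apply]; split_ifs <;> omega, ?_⟩
  ext a; simp only [Finsupp.add_apply, Finsupp.single_apply, mA_apply, mC_apply]
  split_ifs <;> omega

lemma mv_MC (k : ℕ) : StableMove (mM k) (mC k) := by
  refine ⟨2, 0, by omega, by simp [mC_apply], fun t ht => by rw [mC_apply]; split_ifs <;> omega, ?_⟩
  ext a; simp only [Finsupp.add_apply, Finsupp.single_apply, mM_apply, mC_apply]
  split_ifs <;> omega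

lemma mv_MA (k : ℕ) : StableMove (mM k) (mA k) := by
  refine ⟨1, 0, by omega, by simp [mA_apply], fun t ht => by rw [mA_apply]; split_ifs <;> omega, ?_⟩
  ext a; simp only [Finsupp.add_apply, Finsupp.single_apply, mM_apply, mA_apply]
  split_ifs <;> omega

lemma mv_MB (k : ℕ) : StableMove (mM k) (mB k) := by
  refine ⟨2, 1, by omega, by simp [mB_apply], fun t ht => by rw [mB_apply]; split_ifs <;> omega, ?_⟩
  ext a; simp only [Finsupp.add_apply, Finsupp.single_apply, mM_apply, mB_apply]
  split_ifs <;> omega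

-- distinctness
lemma ne_CA (k : ℕ) : mC k ≠ mA k := fun h => by
  have := congrArg (fun f : Mon => f 1) h; simp [mC_apply, mA_apply] at this
lemma ne_BC (k : ℕ) : mB k ≠ mC k := fun h => by
  have := congrArg (fun f : Mon => f 1) h; simp [mB_apply, mC_apply] at this
lemma ne_BA (k : ℕ) : mB k ≠ mA k := fun h => by
  have := congrArg (fun f : Mon => f 1) h; simp [mB_apply, mA_apply] at this
lemma ne_BM (k : ℕ) : mB k ≠ mM k := fun h => by
  have := congrArg (fun f : Mon => f 1) h; simp [mB_apply, mM_apply] at this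
lemma ne_BZ (k : ℕ) : mB k ≠ mZ k := fun h => by
  have := congrArg (fun f : Mon => f 2) h; simp [mB_apply, mZ_apply] at this
lemma ne_AM (k : ℕ) : mA k ≠ mM k := fun h => by
  have := congrArg (fun f : Mon => f 1) h; simp [mA_apply, mM_apply] at this
lemma ne_AZ (k : ℕ) : mA k ≠ mZ k := fun h => by
  have := congrArg (fun f : Mon => f 1) h; simp [mA_apply, mZ_apply] at this
lemma ne_MZ (k : ℕ) : mM k ≠ mZ k := fun h => by
  have := congrArg (fun f : Mon => f 1) h; simp [mM_apply, mZ_apply] at this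
lemma ne_CM (k : ℕ) : mC k ≠ mM k := fun h => by
  have := congrArg (fun f : Mon => f 2) h; simp [mC_apply, mM_apply] at this
lemma ne_CZ (k : ℕ) : mC k ≠ mZ k := fun h => by
  have := congrArg (fun f : Mon => f 1) h; simp [mC_apply, mZ_apply] at this

-- degrees and variables
lemma deg_single_s15 (i v : ℕ) : deg (Finsupp.single i v) = v := by
  simp [deg, Finsupp.sum_single_index]
lemma inv3 {n : ℕ} (hn : 3 ≤ n) (m : Mon) (h : ∀ a, 3 ≤ a → m a = 0) : InVars n m := by
  intro i hi
  rw [Finsupp.mem_support_iff] at hi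
  by_contra hc
  exact hi (h i (by omega))

lemma memT (k n d : ℕ) (hn : 3 ≤ n) (hd : k + 2 = d) : InVars n (mT k) ∧ deg (mT k) = d :=
  ⟨inv3 hn _ (fun a ha => by rw [mT_apply]; split_ifs <;> omega),
   by rw [mT, deg_add, deg_single_s15, deg_single_s15]; omega⟩
lemma memC (k n d : ℕ) (hn : 3 ≤ n) (hd : k + 2 = d) : InVars n (mC k) ∧ deg (mC k) = d :=
  ⟨inv3 hn _ (fun a ha => by rw [mC_apply]; split_ifs <;> omega),
   by rw [mC, deg_add, deg_add, deg_single_s15, deg_single_s15, deg_single_s15]; omega⟩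
lemma memB (k n d : ℕ) (hn : 3 ≤ n) (hd : k + 2 = d) : InVars n (mB k) ∧ deg (mB k) = d :=
  ⟨inv3 hn _ (fun a ha => by rw [mB_apply]; split_ifs <;> omega),
   by rw [mB, deg_add, deg_single_s15, deg_single_s15]; omega⟩
lemma memA (k n d : ℕ) (hn : 3 ≤ n) (hd : k + 2 = d) : InVars n (mA k) ∧ deg (mA k) = d :=
  ⟨inv3 hn _ (fun a ha => by rw [mA_apply]; split_ifs <;> omega),
   by rw [mA, deg_add, deg_single_s15, deg_single_s15]; omega⟩
lemma memM (k n d : ℕ) (hn : 3 ≤ n) (hd : k + 2 = d) : InVars n (mM k) ∧ deg (mM k) = d :=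
  ⟨inv3 hn _ (fun a ha => by rw [mM_apply]; split_ifs <;> omega),
   by rw [mM, deg_add, deg_single_s15, deg_single_s15]; omega⟩
lemma memZ (k n d : ℕ) (hn : 3 ≤ n) (hd : k + 2 = d) : InVars n (mZ k) ∧ deg (mZ k) = d :=
  ⟨inv3 hn _ (fun a ha => by rw [mZ_apply]; split_ifs <;> omega),
   by rw [mZ, deg_single_s15]; omega⟩

lemma core {α : Type*} [Lattice α] (k : ℕ) (f : α → Mon) (hinj : Function.Injective f)
    (hle : ∀ a b : α, a ≤ b ↔ Relation.ReflTransGen StableMove (f b) (f a))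
    (qT qC qB qA qM : α)
    (eT : f qT = mT k) (eC : f qC = mC k) (eB : f qB = mB k)
    (eA : f qA = mA k) (eM : f qM = mM k) :
    ¬ ∀ a b c : α, a ≤ c → a ⊔ (b ⊓ c) = (a ⊔ b) ⊓ c := by
  intro hmod
  have hTC : qT ≤ qC := (hle _ _).2 (by rw [eT, eC]; exact Relation.ReflTransGen.single (mv_CT k))
  have hTB : qT ≤ qB := (hle _ _).2 (by rw [eT, eB]; exact Relation.ReflTransGen.single (mv_BT k))
  have hCA : qC ≤ qA := (hle _ _).2 (by rw [eC, eA]; exact Relation.ReflTransGen.single (mv_AC k))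
  have hCM : qC ≤ qM := (hle _ _).2 (by rw [eC, eM]; exact Relation.ReflTransGen.single (mv_MC k))
  have hAM : qA ≤ qM := (hle _ _).2 (by rw [eA, eM]; exact Relation.ReflTransGen.single (mv_MA k))
  have hBM : qB ≤ qM := (hle _ _).2 (by rw [eB, eM]; exact Relation.ReflTransGen.single (mv_MB k))
  have hTA : qT ≤ qA := hTC.trans hCA
  have hmain : qC ⊔ (qB ⊓ qA) = (qC ⊔ qB) ⊓ qA := hmod qC qB qA hCA
  have claim1 : qB ⊓ qA = qT := by
    have h1 : qT ≤ qB ⊓ qA := le_inf hTB hTA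
    have h7 : Relation.ReflTransGen StableMove (f (qB ⊓ qA)) (mT k) := by
      rw [← eT]; exact (hle qT (qB ⊓ qA)).1 h1
    have h6 := downT k h7
    have hBle := (hle (qB ⊓ qA) qB).1 inf_le_left
    have hAle := (hle (qB ⊓ qA) qA).1 inf_le_right
    rw [eB] at hBle; rw [eA] at hAle
    rcases h6 with h | h | h | h | h | h
    · exact hinj (h.trans eT.symm)
    · rw [h] at hBle
      rcases downC k hBle with h2 | h2 | h2 | h2
      · exact absurd h2 (ne_BC k)
      · exact absurd h2 (ne_BA k)
      · exact absurd h2 (ne_BM k)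
      · exact absurd h2 (ne_BZ k)
    · rw [h] at hAle
      rcases downB k hAle with h2 | h2 | h2
      · exact absurd h2.symm (ne_BA k)
      · exact absurd h2 (ne_AM k)
      · exact absurd h2 (ne_AZ k)
    · rw [h] at hBle
      rcases downA k hBle with h2 | h2 | h2
      · exact absurd h2 (ne_BA k)
      · exact absurd h2 (ne_BM k)
      · exact absurd h2 (ne_BZ k)
    · rw [h] at hAle
      rcases downM k hAle with h2 | h2
      · exact absurd h2 (ne_AM k)
      · exact absurd h2 (ne_AZ k)
    · rw [h] at hAle
      exact absurd (downZ k hAle) (ne_AZ k)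
  have claim2 : qC ⊔ qB = qM := by
    have hub : qC ⊔ qB ≤ qM := sup_le hCM hBM
    have hC2 := (hle qC (qC ⊔ qB)).1 le_sup_left
    have hB2 := (hle qB (qC ⊔ qB)).1 le_sup_right
    rw [eC] at hC2; rw [eB] at hB2
    rcases downC k hC2 with h | h | h | h
    · rw [h] at hB2
      rcases downB k hB2 with h2 | h2 | h2
      · exact absurd h2.symm (ne_BC k)
      · exact absurd h2 (ne_CM k)
      · exact absurd h2 (ne_CZ k)
    · rw [h] at hB2
      rcases downB k hB2 with h2 | h2 | h2
      · exact absurd h2.symm (ne_BA k)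
      · exact absurd h2 (ne_AM k)
      · exact absurd h2 (ne_AZ k)
    · exact hinj (h.trans eM.symm)
    · have h3 := (hle (qC ⊔ qB) qM).1 hub
      rw [eM, h] at h3
      exact absurd (downZ k h3) (ne_MZ k)
  rw [claim1, claim2, sup_eq_left.2 hTC, inf_eq_right.2 hAM] at hmain
  exact ne_CA k (by rw [← eC, ← eA, hmain])

/-- For `n ≥ 3` and `d ≥ 2`, the lattice `(M_d^n, B_{n,d})` is
not modular: any lattice structure whose order is the stable order `B_{n,d}`
fails the modular law `a ≤ c → a ⊔ (b ⊓ c) = (a ⊔ b) ⊓ c`. -/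
theorem stmt15 (n d : ℕ) (hn : 3 ≤ n) (hd : 2 ≤ d) :
    ∀ inst : Lattice {m : Mon // InVars n m ∧ deg m = d},
      (∀ a b : {m : Mon // InVars n m ∧ deg m = d},
        inst.le a b ↔ Relation.ReflTransGen StableMove b.1 a.1) →
      ¬ ∀ a b c : {m : Mon // InVars n m ∧ deg m = d},
          inst.le a c → inst.sup a (inst.inf b c) = inst.inf (inst.sup a b) c := by
  intro inst hle hmod
  have hkd : (d - 2) + 2 = d := by omega
  exact @core _ inst (d - 2) (fun x => x.1) (fun a b h => Subtype.ext h) hle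
    ⟨mT (d-2), memT _ n d hn hkd⟩ ⟨mC (d-2), memC _ n d hn hkd⟩
    ⟨mB (d-2), memB _ n d hn hkd⟩ ⟨mA (d-2), memA _ n d hn hkd⟩
    ⟨mM (d-2), memM _ n d hn hkd⟩ rfl rfl rfl rfl rfl hmod
end

section
/- Let (T, ≥) be a finite poset, let A ⊆ T, and for B ⊆ A and v ∈ ℕ let Φ(B, v) denote the number of filters of cardinality v of the induced subposet (B, ≥). For x ∈ A set I(x) = {y ∈ A : y ≤ x} and F(x) = {y ∈ A : y ≥ x}. Then for every x ∈ A and every v: Φ(A, v) = Φ(A ∖ I(x), v) + Φ(A ∖ F(x), v − #F(x)), where the second summand is 0 when v < #F(x). Consequently the total number of filters satisfies φ(A) = φ(A ∖ I(x)) + φ(A ∖ F(x)). -/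
section Aux
variable {T : Type*} [Fintype T] [PartialOrder T] [DecidableEq T]
    [DecidableRel (· ≤ · : T → T → Prop)]
    (A : Finset T) (x : T)

/-- split a filter-count by membership of `x`. -/
lemma split_card (p : Finset T → Prop) :
    Nat.card {U : Finset T // p U} =
      Nat.card {U : Finset T // p U ∧ x ∉ U} +
      Nat.card {U : Finset T // p U ∧ x ∈ U} := by
  classical
  have e : {U : Finset T // p U} ≃
      {U : Finset T // p U ∧ x ∉ U} ⊕ {U : Finset T // p U ∧ x ∈ U} := by
    exact (Equiv.sumCompl (fun U : {U : Finset T // p U} => x ∈ U.1)).symm.trans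
      (Equiv.sumComm _ _ |>.trans (Equiv.sumCongr
        (Equiv.subtypeSubtypeEquivSubtypeInter p (x ∉ ·))
        (Equiv.subtypeSubtypeEquivSubtypeInter p (x ∈ ·))))
  rw [Nat.card_congr e, Nat.card_sum]

variable (hx : x ∈ A)

/-- filters avoiding `x` are the filters of `A \ I(x)`. -/
noncomputable def equivNotLe (p : Finset T → Prop) :
    {U : Finset T // (U ⊆ A ∧ (∀ u ∈ U, ∀ w ∈ A, u ≤ w → w ∈ U) ∧ p U) ∧ x ∉ U} ≃
    {U : Finset T // U ⊆ (A.filter fun y => ¬ y ≤ x) ∧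
      (∀ u ∈ U, ∀ w ∈ (A.filter fun y => ¬ y ≤ x), u ≤ w → w ∈ U) ∧ p U} where
  toFun := fun U' => ⟨U'.1, by
    obtain ⟨U, ⟨hUA, hup, hp⟩, hxU⟩ := U'
    constructor
    · intro u hu
      refine Finset.mem_filter.2 ⟨hUA hu, fun hle => hxU (hup u hu x hx hle)⟩
    refine ⟨fun u hu w hw hle => hup u hu w (Finset.mem_filter.1 hw).1 hle, hp⟩⟩
  invFun := fun U' => ⟨U'.1, by
    obtain ⟨U, hUB, hup, hp⟩ := U'
    have hUA : U ⊆ A := hUB.trans (Finset.filter_subset _ _)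
    refine ⟨⟨hUA, fun u hu w hw hle => ?_, hp⟩, fun hxU => ?_⟩
    · have hu' := Finset.mem_filter.1 (hUB hu)
      exact hup u hu w (Finset.mem_filter.2 ⟨hw, fun hwx => hu'.2 (hle.trans hwx)⟩) hle
    · exact (Finset.mem_filter.1 (hUB hxU)).2 le_rfl⟩
  left_inv := fun U => rfl
  right_inv := fun U => rfl

/-- filters containing `x` are the filters of `A \ F(x)` shifted by `F(x)`. -/
noncomputable def equivLe (p q : Finset T → Prop)
    (hpq : ∀ V ⊆ (A.filter fun y => ¬ x ≤ y), (p (V ∪ A.filter fun y => x ≤ y) ↔ q V)) :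
    {U : Finset T // (U ⊆ A ∧ (∀ u ∈ U, ∀ w ∈ A, u ≤ w → w ∈ U) ∧ p U) ∧ x ∈ U} ≃
    {V : Finset T // V ⊆ (A.filter fun y => ¬ x ≤ y) ∧
      (∀ u ∈ V, ∀ w ∈ (A.filter fun y => ¬ x ≤ y), u ≤ w → w ∈ V) ∧ q V} where
  toFun := fun U' => ⟨U'.1 \ (A.filter fun y => x ≤ y), by
    obtain ⟨U, ⟨hUA, hup, hp⟩, hxU⟩ := U'
    have hFU : (A.filter fun y => x ≤ y) ⊆ U := fun w hw => by
      have := Finset.mem_filter.1 hw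
      exact hup x hxU w this.1 this.2
    have hsub : U \ (A.filter fun y => x ≤ y) ⊆ (A.filter fun y => ¬ x ≤ y) := by
      intro u hu
      have := Finset.mem_sdiff.1 hu
      exact Finset.mem_filter.2 ⟨hUA this.1, fun hle => this.2 (Finset.mem_filter.2 ⟨hUA this.1, hle⟩)⟩
    refine ⟨hsub, fun u hu w hw hle => ?_, ?_⟩
    · have hu' := Finset.mem_sdiff.1 hu
      have hw' := Finset.mem_filter.1 hw
      exact Finset.mem_sdiff.2 ⟨hup u hu'.1 w hw'.1 hle,
        fun hwF => hw'.2 (Finset.mem_filter.1 hwF).2⟩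
    · have : U \ (A.filter fun y => x ≤ y) ∪ (A.filter fun y => x ≤ y) = U := by
        rw [Finset.sdiff_union_self_eq_union, Finset.union_eq_left.2 hFU]
      exact (hpq _ hsub).1 (by rw [this]; exact hp)⟩
  invFun := fun V' => ⟨V'.1 ∪ (A.filter fun y => x ≤ y), by
    obtain ⟨V, hVC, hup, hq⟩ := V'
    have hVA : V ⊆ A := hVC.trans (Finset.filter_subset _ _)
    refine ⟨⟨Finset.union_subset hVA (Finset.filter_subset _ _),
      fun u hu w hw hle => ?_, (hpq _ hVC).2 hq⟩,
      Finset.mem_union_right _ (Finset.mem_filter.2 ⟨hx, le_rfl⟩)⟩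
    rcases Finset.mem_union.1 hu with hu | hu
    · by_cases hxw : x ≤ w
      · exact Finset.mem_union_right _ (Finset.mem_filter.2 ⟨hw, hxw⟩)
      · exact Finset.mem_union_left _ (hup u hu w (Finset.mem_filter.2 ⟨hw, hxw⟩) hle)
    · exact Finset.mem_union_right _
        (Finset.mem_filter.2 ⟨hw, (Finset.mem_filter.1 hu).2.trans hle⟩)⟩
  left_inv := fun U' => by
    obtain ⟨U, ⟨hUA, hup, hp⟩, hxU⟩ := U'
    have hFU : (A.filter fun y => x ≤ y) ⊆ U := fun w hw => by
      have := Finset.mem_filter.1 hw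
      exact hup x hxU w this.1 this.2
    exact Subtype.ext (by
      simp only [Finset.sdiff_union_self_eq_union]
      exact Finset.union_eq_left.2 hFU)
  right_inv := fun V' => by
    obtain ⟨V, hVC, hup, hq⟩ := V'
    refine Subtype.ext ?_
    have : Disjoint V (A.filter fun y => x ≤ y) := by
      refine Finset.disjoint_left.2 fun a haV haF => ?_
      exact (Finset.mem_filter.1 (hVC haV)).2 (Finset.mem_filter.1 haF).2
    simp [Finset.union_sdiff_self_eq_union, Finset.union_sdiff_right,
      Finset.sdiff_eq_self_of_disjoint this]

end Aux


/-- `Φ(B, v)`: the number of filters (upper sets) of cardinality `v` of the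
subposet induced on `B ⊆ T`. -/
noncomputable def Phi {T : Type*} [PartialOrder T] (B : Finset T) (v : ℕ) : ℕ :=
  Nat.card {U : Finset T //
    U ⊆ B ∧ (∀ u ∈ U, ∀ w ∈ B, u ≤ w → w ∈ U) ∧ U.card = v}

/-- `φ(B)`: the total number of filters (upper sets) of the subposet induced on
`B ⊆ T`. -/
noncomputable def phiTot {T : Type*} [PartialOrder T] (B : Finset T) : ℕ :=
  Nat.card {U : Finset T // U ⊆ B ∧ ∀ u ∈ U, ∀ w ∈ B, u ≤ w → w ∈ U}

/-- Let `(T, ≤)` be a finite poset, `A ⊆ T` and `x ∈ A`; put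
`I(x) = {y ∈ A : y ≤ x}` and `F(x) = {y ∈ A : x ≤ y}`.  Then for every `v`,
`Φ(A, v) = Φ(A \ I(x), v) + Φ(A \ F(x), v − #F(x))`, the second summand being `0`
when `v < #F(x)`; consequently `φ(A) = φ(A \ I(x)) + φ(A \ F(x))`. -/
theorem stmt16 {T : Type*} [Fintype T] [PartialOrder T] [DecidableEq T]
    [DecidableRel (· ≤ · : T → T → Prop)]
    (A : Finset T) (x : T) (hx : x ∈ A) :
    (∀ v : ℕ,
      Phi A v = Phi (A.filter fun y => ¬ y ≤ x) v +
        (if (A.filter fun y => x ≤ y).card ≤ v then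
          Phi (A.filter fun y => ¬ x ≤ y) (v - (A.filter fun y => x ≤ y).card)
        else 0)) ∧
    phiTot A = phiTot (A.filter fun y => ¬ y ≤ x) +
      phiTot (A.filter fun y => ¬ x ≤ y) := by
  classical
  set F := A.filter fun y => x ≤ y with hF
  set B := A.filter fun y => ¬ y ≤ x with hB
  set C := A.filter fun y => ¬ x ≤ y with hC
  have hdisj : ∀ V : Finset T, V ⊆ C → Disjoint V F := by
    intro V hVC
    exact Finset.disjoint_left.2 fun a haV haF =>
      (Finset.mem_filter.1 (hVC haV)).2 (Finset.mem_filter.1 haF).2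
  constructor
  · intro v
    rw [Phi, split_card x (fun U => U ⊆ A ∧ (∀ u ∈ U, ∀ w ∈ A, u ≤ w → w ∈ U) ∧ U.card = v)]
    congr 1
    · exact Nat.card_congr (equivNotLe A x hx (fun U => U.card = v))
    · by_cases hfv : F.card ≤ v
      · rw [if_pos hfv]
        refine Nat.card_congr (equivLe A x hx (fun U => U.card = v)
          (fun V => V.card = v - F.card) ?_)
        intro V hVC
        rw [show (A.filter fun y => x ≤ y) = F from rfl,
          Finset.card_union_of_disjoint (hdisj V hVC)]
        omega
      · rw [if_neg hfv]
        have : IsEmpty {U : Finset T //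
            (U ⊆ A ∧ (∀ u ∈ U, ∀ w ∈ A, u ≤ w → w ∈ U) ∧ U.card = v) ∧ x ∈ U} := by
          refine ⟨fun U' => ?_⟩
          obtain ⟨U, ⟨hUA, hup, hcard⟩, hxU⟩ := U'
          have hFU : F ⊆ U := fun w hw => by
            have := Finset.mem_filter.1 hw
            exact hup x hxU w this.1 this.2
          exact hfv (hcard ▸ Finset.card_le_card hFU)
        simp [Nat.card_of_isEmpty]
  · rw [phiTot, split_card x (fun U => U ⊆ A ∧ ∀ u ∈ U, ∀ w ∈ A, u ≤ w → w ∈ U)]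
    have etrue : ∀ S : Finset T,
        {U : Finset T // U ⊆ S ∧ (∀ u ∈ U, ∀ w ∈ S, u ≤ w → w ∈ U) ∧ True} ≃
        {U : Finset T // U ⊆ S ∧ ∀ u ∈ U, ∀ w ∈ S, u ≤ w → w ∈ U} :=
      fun S => Equiv.subtypeEquivRight (by simp)
    have etrue' : {U : Finset T // (U ⊆ A ∧ ∀ u ∈ U, ∀ w ∈ A, u ≤ w → w ∈ U) ∧ x ∉ U} ≃
        {U : Finset T // (U ⊆ A ∧ (∀ u ∈ U, ∀ w ∈ A, u ≤ w → w ∈ U) ∧ True) ∧ x ∉ U} :=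
      Equiv.subtypeEquivRight (by simp)
    have etrue'' : {U : Finset T // (U ⊆ A ∧ ∀ u ∈ U, ∀ w ∈ A, u ≤ w → w ∈ U) ∧ x ∈ U} ≃
        {U : Finset T // (U ⊆ A ∧ (∀ u ∈ U, ∀ w ∈ A, u ≤ w → w ∈ U) ∧ True) ∧ x ∈ U} :=
      Equiv.subtypeEquivRight (by simp)
    congr 1
    · exact Nat.card_congr
        (etrue'.trans ((equivNotLe A x hx (fun _ => True)).trans (etrue B)))
    · exact Nat.card_congr
        (etrue''.trans ((equivLe A x hx (fun _ => True) (fun _ => True)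
          (fun _ _ => Iff.rfl)).trans (etrue C)))
end
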